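/- arXiv:1012.2509 — 10 statements merged into one kernel-verified Lean document; each statement's English description precedes it below -/
import Mathlib

section
/- Consider the random design on n items with 2t tests and column-sparsity s = t/d (t a positive multiple of d, d ≥ 1): each item j is independently assigned a uniformly random s-element subset S j of Fin (2*t). Fix D ⊆ Fin n with |D| ≤ d and fix j ∉ D. Then the probability that j fails to be distinguishable from D (i.e., every test in S j contains some item of D) is at most 2^{-t/d}. -/
/-!
Fix the columns of every item other than `j`. The columns of `D` then cover at most
`|D| s ≤ t` of the `2t` tests, so at most `C(t, s)` of the `C(2t, s)` equally likely columns
of `j` lie inside their union, and `C(t, s) 2^s ≤ C(2t, s)` because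
`(2t - i) ≥ 2 (t - i)` factor by factor. Double counting over the classes of designs that
agree off `j` turns this conditional bound into the unconditional one.
-/

open Finset

namespace Nat

theorem pow_mul_descFactorial_le (k t : ℕ) :
    ∀ s, k ^ s * t.descFactorial s ≤ (k * t).descFactorial s
  | 0 => by simp
  | s + 1 => by
    have hstep : k * (t - s) ≤ k * t - s := by
      rcases Nat.eq_zero_or_pos k with rfl | hk
      · simp
      · rw [Nat.mul_sub]; exact Nat.sub_le_sub_left (Nat.le_mul_of_pos_left s hk) _
    calc k ^ (s + 1) * t.descFactorial (s + 1)
        = k * (t - s) * (k ^ s * t.descFactorial s) := by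
          rw [descFactorial_succ, pow_succ]; ring
      _ ≤ (k * t - s) * (k * t).descFactorial s :=
          Nat.mul_le_mul hstep (pow_mul_descFactorial_le k t s)
      _ = (k * t).descFactorial (s + 1) := (descFactorial_succ _ _).symm

theorem choose_mul_pow_le (k t s : ℕ) : t.choose s * k ^ s ≤ (k * t).choose s := by
  have h := pow_mul_descFactorial_le k t s
  rw [descFactorial_eq_factorial_mul_choose, descFactorial_eq_factorial_mul_choose,
    mul_left_comm] at h
  exact Nat.le_of_mul_le_mul_left (by rwa [mul_comm (t.choose s)]) s.factorial_pos

end Nat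

section Design

variable {ι α : Type*} [Fintype ι] [DecidableEq ι] [Fintype α]

variable (ι α) in
def columnDesigns (s : ℕ) : Finset (ι → Finset α) := {S | ∀ i, #(S i) = s}

@[simp]
theorem mem_columnDesigns {s : ℕ} {S : ι → Finset α} :
    S ∈ columnDesigns ι α s ↔ ∀ i, #(S i) = s := by
  simp [columnDesigns]

variable [DecidableEq α]

theorem choose_card_le_card_agreeOff {s : ℕ} {S : ι → Finset α} (hS : ∀ i, #(S i) = s)
    (j : ι) :
    (Fintype.card α).choose s ≤ #{S' ∈ columnDesigns ι α s | ∀ k ≠ j, S k = S' k} := by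
  rw [← card_univ, ← card_powersetCard]
  refine card_le_card_of_injOn (Function.update S j) (fun T hT => ?_) ?_
  · have hT := (mem_powersetCard.1 hT).2
    simp only [coe_filter, mem_columnDesigns]
    refine ⟨fun i => ?_, fun k hk => (Function.update_of_ne hk _ _).symm⟩
    rcases eq_or_ne i j with rfl | hi
    · simpa
    · simpa [hi] using hS i
  · intro T₁ _ T₂ _ h
    simpa using congr_fun h j

theorem card_covered_agreeOff_le {s : ℕ} {D : Finset ι} {j : ι} (hj : j ∉ D)
    {S' : ι → Finset α} (hS' : ∀ k ∈ D, #(S' k) ≤ s) :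
    #{S ∈ {S ∈ columnDesigns ι α s | ∀ i ∈ S j, ∃ k ∈ D, i ∈ S k} | ∀ k ≠ j, S k = S' k} ≤
      (#D * s).choose s := by
  calc _ ≤ #((D.biUnion S').powersetCard s) := by
        refine card_le_card_of_injOn (· j) (fun S hS => ?_) (fun S₁ hS₁ S₂ hS₂ h => ?_)
        · simp only [coe_filter, mem_filter, mem_columnDesigns] at hS
          obtain ⟨⟨hcard, hcov⟩, hagree⟩ := hS
          refine mem_powersetCard.2 ⟨fun i hi => ?_, hcard j⟩
          obtain ⟨k, hk, hik⟩ := hcov i hi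
          exact mem_biUnion.2 ⟨k, hk, hagree k (ne_of_mem_of_not_mem hk hj) ▸ hik⟩
        · simp only [coe_filter, mem_filter] at hS₁ hS₂
          funext i
          rcases eq_or_ne i j with rfl | hi
          · exact h
          · rw [hS₁.2 i hi, hS₂.2 i hi]
    _ = (#(D.biUnion S')).choose s := card_powersetCard _ _
    _ ≤ (#D * s).choose s := Nat.choose_le_choose s (card_biUnion_le_card_mul D S' s hS')

theorem card_notDistinguishable_mul_le (s : ℕ) {D : Finset ι} {j : ι} (hj : j ∉ D) :
    #{S ∈ columnDesigns ι α s | ∀ i ∈ S j, ∃ k ∈ D, i ∈ S k} * (Fintype.card α).choose s ≤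
      #(columnDesigns ι α s) * (#D * s).choose s :=
  card_mul_le_card_mul (fun S S' : ι → Finset α => ∀ k ≠ j, S k = S' k)
    (fun _ hS => choose_card_le_card_agreeOff (mem_columnDesigns.1 (mem_filter.1 hS).1) j)
    (fun _ hS' => card_covered_agreeOff_le hj fun k _ => (mem_columnDesigns.1 hS' k).le)

theorem card_notDistinguishable_mul_two_pow_le {s t : ℕ} (hα : Fintype.card α = 2 * t)
    (hs : s ≤ t) {D : Finset ι} (hcover : #D * s ≤ t) {j : ι} (hj : j ∉ D) :
    #{S ∈ columnDesigns ι α s | ∀ i ∈ S j, ∃ k ∈ D, i ∈ S k} * 2 ^ s ≤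
      #(columnDesigns ι α s) := by
  refine Nat.le_of_mul_le_mul_right ?_ (Nat.choose_pos hs)
  calc _ = _ * (t.choose s * 2 ^ s) := by ring
    _ ≤ _ * (Fintype.card α).choose s := by
      rw [hα]; exact Nat.mul_le_mul_left _ (Nat.choose_mul_pow_le 2 t s)
    _ ≤ _ * (#D * s).choose s := card_notDistinguishable_mul_le s hj
    _ ≤ _ * t.choose s := Nat.mul_le_mul_left _ (Nat.choose_le_choose s hcover)

end Design

theorem prob_not_distinguishable_le_general (n t d : ℕ) (D : Finset (Fin n)) (hD : D.card ≤ d)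
    (j : Fin n) (hj : j ∉ D) :
    (((Finset.univ.filter
          (fun S : Fin n → Finset (Fin (2 * t)) => ∀ i, (S i).card = t / d)).filter
        (fun S => ∀ i ∈ S j, ∃ k ∈ D, i ∈ S k)).card : ℝ) /
      ((Finset.univ.filter
          (fun S : Fin n → Finset (Fin (2 * t)) => ∀ i, (S i).card = t / d)).card : ℝ)
      ≤ (1 / 2 : ℝ) ^ (t / d) := by
  rw [show univ.filter (fun S : Fin n → Finset (Fin (2 * t)) => ∀ i, #(S i) = t / d) =
    columnDesigns _ _ (t / d) by ext; simp]
  have hcount := card_notDistinguishable_mul_two_pow_le (Fintype.card_fin (2 * t))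
    (Nat.div_le_self t d) ((Nat.mul_le_mul_right _ hD).trans (Nat.mul_div_le t d)) hj
  refine div_le_of_le_mul₀ (by positivity) (by positivity) ?_
  rw [one_div_pow, one_div_mul_eq_div, le_div_iff₀ (by positivity)]
  norm_cast
  -- the two sides differ only in the `Decidable` instances of the filters
  convert hcount

/-- In the random design on `n` items with `2t` tests and
column-sparsity `s = t/d` (`t` a positive multiple of `d`, `d ≥ 1`), where each
item is independently assigned a uniformly random `s`-element subset of
`Fin (2t)` (equivalently, the uniform distribution on all such column-support
functions), for any fixed `D ⊆ Fin n` with `|D| ≤ d` and `j ∉ D`, the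
probability that `j` fails to be distinguishable from `D` (every test in `S j`
contains some item of `D`) is at most `2^{-t/d}`. -/
theorem prob_not_distinguishable_le (n t d : ℕ) (hd : 1 ≤ d) (ht : 0 < t)
    (hdvd : d ∣ t) (D : Finset (Fin n)) (hD : D.card ≤ d)
    (j : Fin n) (hj : j ∉ D) :
    (((Finset.univ.filter
          (fun S : Fin n → Finset (Fin (2 * t)) => ∀ i, (S i).card = t / d)).filter
        (fun S => ∀ i ∈ S j, ∃ k ∈ D, i ∈ S k)).card : ℝ) /
      ((Finset.univ.filter
          (fun S : Fin n → Finset (Fin (2 * t)) => ∀ i, (S i).card = t / d)).card : ℝ)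
      ≤ (1 / 2 : ℝ) ^ (t / d) :=
  prob_not_distinguishable_le_general n t d D hD j hj
end

section
/- Consider the random design on n items with 2t tests and column-sparsity s = t/d (t a positive multiple of d, d ≥ 1). For any fixed set D ⊆ Fin n with |D| ≤ d, the probability that the design fails to be D-distinguishing is at most n * 2^{-t/d}. -/
lemma two_pow_choose_le (t s : ℕ) (h : s ≤ t) : 2 ^ s * t.choose s ≤ (2 * t).choose s := by
  induction s with
  | zero => simp
  | succ s ih =>
    have hs : s ≤ t := Nat.le_of_succ_le h
    have ih' := ih hs
    have key : (2 * t).choose (s + 1) * (s + 1) = (2 * t).choose s * (2 * t - s) :=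
      Nat.choose_succ_right_eq _ _
    have key2 : t.choose (s + 1) * (s + 1) = t.choose s * (t - s) :=
      Nat.choose_succ_right_eq _ _
    have hsub : 2 * (t - s) ≤ 2 * t - s := by omega
    have h1 : 2 ^ (s + 1) * t.choose (s + 1) * (s + 1) ≤ (2 * t).choose (s + 1) * (s + 1) := by
      calc 2 ^ (s + 1) * t.choose (s + 1) * (s + 1)
          = 2 ^ s * (t.choose (s + 1) * (s + 1)) * 2 := by ring
        _ = 2 ^ s * t.choose s * (2 * (t - s)) := by rw [key2]; ring
        _ ≤ (2 * t).choose s * (2 * t - s) := Nat.mul_le_mul ih' hsub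
        _ = (2 * t).choose (s + 1) * (s + 1) := key.symm
    exact Nat.le_of_mul_le_mul_right h1 (Nat.succ_pos s)

/-- In the random design on `n` items with `2t` tests and
column-sparsity `s = t/d` (each item independently assigned a uniformly random
`s`-element subset of `Fin (2t)`), for any fixed `D ⊆ Fin n` with `|D| ≤ d`,
the probability that the design fails to be `D`-distinguishing is at most
`n · 2^{-t/d}`. -/
theorem prob_not_distinguishing_le (n t d : ℕ) (hd : 1 ≤ d) (ht : 0 < t)
    (hdvd : d ∣ t) (D : Finset (Fin n)) (hD : D.card ≤ d) :
    (((Finset.univ.filter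
          (fun S : Fin n → Finset (Fin (2 * t)) => ∀ i, (S i).card = t / d)).filter
        (fun S => ¬ ∀ j ∉ D, ∃ i ∈ S j, ∀ k ∈ D, i ∉ S k)).card : ℝ) /
      ((Finset.univ.filter
          (fun S : Fin n → Finset (Fin (2 * t)) => ∀ i, (S i).card = t / d)).card : ℝ)
      ≤ (n : ℝ) * (1 / 2 : ℝ) ^ (t / d) := by
  set s := t / d with hs_def
  have hts : d * s = t := Nat.mul_div_cancel' hdvd
  have hspos : 0 < s := Nat.div_pos (Nat.le_of_dvd ht hdvd) hd
  have hst : s ≤ t := Nat.div_le_self t d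
  set C := (2 * t).choose s with hC
  have hCpos : 0 < C := Nat.choose_pos (by omega)
  set Ω := Finset.univ.filter (fun S : Fin n → Finset (Fin (2 * t)) => ∀ i, (S i).card = s)
    with hΩ
  have hΩeq : Ω = Fintype.piFinset
      (fun _ : Fin n => Finset.powersetCard s (Finset.univ : Finset (Fin (2 * t)))) := by
    ext S
    simp [hΩ, Fintype.mem_piFinset, Finset.mem_powersetCard, Finset.subset_univ]
  have hΩcard : Ω.card = C ^ n := by
    rw [hΩeq, Fintype.card_piFinset]
    simp [hC, Finset.card_powersetCard]
  have key : ∀ j ∉ D, (Ω.filter (fun S => S j ⊆ D.biUnion S)).card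
      ≤ t.choose s * C ^ (n - 1) := by
    intro j hj
    set T := Fintype.piFinset (fun k : Fin n =>
      if k = j then ({(∅ : Finset (Fin (2 * t)))} : Finset _)
      else Finset.powersetCard s Finset.univ) with hT
    have hTcard : T.card = C ^ (n - 1) := by
      rw [hT, Fintype.card_piFinset]
      have hcards : ∀ k : Fin n, (if k = j then ({(∅ : Finset (Fin (2 * t)))} : Finset _)
          else Finset.powersetCard s Finset.univ).card = if k = j then 1 else C := by
        intro k; split <;> simp [hC, Finset.card_powersetCard]
      rw [Finset.prod_congr rfl (fun k _ => hcards k),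
        ← Finset.mul_prod_erase Finset.univ _ (Finset.mem_univ j), if_pos rfl, one_mul,
        Finset.prod_congr rfl (fun k hk => if_neg (Finset.ne_of_mem_erase hk)),
        Finset.prod_const, Finset.card_erase_of_mem (Finset.mem_univ j), Finset.card_univ,
        Fintype.card_fin]
    have hmaps : ∀ S ∈ Ω.filter (fun S => S j ⊆ D.biUnion S), Function.update S j ∅ ∈ T := by
      intro S hS
      rw [Finset.mem_filter] at hS
      have hcard : ∀ i, (S i).card = s := (Finset.mem_filter.mp hS.1).2
      rw [hT, Fintype.mem_piFinset]
      intro k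
      by_cases hk : k = j
      · subst hk; simp
      · rw [if_neg hk, Function.update_of_ne hk, Finset.mem_powersetCard]
        exact ⟨Finset.subset_univ _, hcard k⟩
    have hfib : ∀ g ∈ T, ((Ω.filter (fun S => S j ⊆ D.biUnion S)).filter
        (fun S => Function.update S j ∅ = g)).card ≤ t.choose s := by
      intro g hg
      rw [hT, Fintype.mem_piFinset] at hg
      set U := D.biUnion g with hU
      have hgk : ∀ k ∈ D, (g k).card = s := by
        intro k hk
        have hkj : k ≠ j := fun h => hj (h ▸ hk)
        have := hg k
        rw [if_neg hkj, Finset.mem_powersetCard] at this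
        exact this.2
      have hUcard : U.card ≤ t := by
        calc U.card ≤ ∑ k ∈ D, (g k).card := Finset.card_biUnion_le
          _ = D.card * s := by
              rw [Finset.sum_congr rfl hgk, Finset.sum_const, smul_eq_mul]
          _ ≤ d * s := Nat.mul_le_mul_right s hD
          _ = t := hts
      have hmem : ∀ S ∈ (Ω.filter (fun S => S j ⊆ D.biUnion S)).filter
          (fun S => Function.update S j ∅ = g), S j ∈ Finset.powersetCard s U := by
        intro S hS
        rw [Finset.mem_filter] at hS
        obtain ⟨hS1, hupd⟩ := hS
        rw [Finset.mem_filter] at hS1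
        obtain ⟨hSΩ, hsub⟩ := hS1
        have hcard : ∀ i, (S i).card = s := (Finset.mem_filter.mp hSΩ).2
        have hSg : ∀ k ∈ D, S k = g k := by
          intro k hk
          have hkj : k ≠ j := fun h => hj (h ▸ hk)
          have := congrFun hupd k
          rwa [Function.update_of_ne hkj] at this
        have hbi : D.biUnion S = U := Finset.biUnion_congr rfl hSg
        rw [Finset.mem_powersetCard]
        exact ⟨hbi ▸ hsub, hcard j⟩
      have hinj : Set.InjOn (fun S : Fin n → Finset (Fin (2 * t)) => S j)
          ((Ω.filter (fun S => S j ⊆ D.biUnion S)).filter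
          (fun S => Function.update S j ∅ = g)) := by
        intro S hS S' hS' hEq
        have h1 := (Finset.mem_filter.mp (Finset.mem_coe.mp hS)).2
        have h2 := (Finset.mem_filter.mp (Finset.mem_coe.mp hS')).2
        funext k
        by_cases hk : k = j
        · subst hk; exact hEq
        · have := congrFun (h1.trans h2.symm) k
          rwa [Function.update_of_ne hk, Function.update_of_ne hk] at this
      calc ((Ω.filter (fun S => S j ⊆ D.biUnion S)).filter
            (fun S => Function.update S j ∅ = g)).card
          ≤ (Finset.powersetCard s U).card := Finset.card_le_card_of_injOn _ hmem hinj
        _ = U.card.choose s := Finset.card_powersetCard _ _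
        _ ≤ t.choose s := Nat.choose_le_choose s hUcard
    calc (Ω.filter (fun S => S j ⊆ D.biUnion S)).card
        = ∑ g ∈ T, ((Ω.filter (fun S => S j ⊆ D.biUnion S)).filter
            (fun S => Function.update S j ∅ = g)).card :=
          Finset.card_eq_sum_card_fiberwise hmaps
      _ ≤ ∑ _g ∈ T, t.choose s := Finset.sum_le_sum hfib
      _ = T.card * t.choose s := by rw [Finset.sum_const, smul_eq_mul]
      _ = t.choose s * C ^ (n - 1) := by rw [hTcard, mul_comm]
  set B := Ω.filter (fun S => ¬ ∀ j ∉ D, ∃ i ∈ S j, ∀ k ∈ D, i ∉ S k) with hB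
  have hBsub : B ⊆ (Finset.univ \ D).biUnion
      (fun j => Ω.filter (fun S => S j ⊆ D.biUnion S)) := by
    intro S hS
    rw [hB, Finset.mem_filter] at hS
    obtain ⟨hSΩ, hbad⟩ := hS
    push_neg at hbad
    obtain ⟨j, hjD, hj⟩ := hbad
    refine Finset.mem_biUnion.mpr ⟨j, by simp [hjD], ?_⟩
    rw [Finset.mem_filter]
    refine ⟨hSΩ, fun i hi => Finset.mem_biUnion.mpr ?_⟩
    exact hj i hi
  have hBcard : B.card ≤ n * (t.choose s * C ^ (n - 1)) := by
    calc B.card ≤ ∑ j ∈ Finset.univ \ D, (Ω.filter (fun S => S j ⊆ D.biUnion S)).card :=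
          le_trans (Finset.card_le_card hBsub) Finset.card_biUnion_le
      _ ≤ ∑ j ∈ Finset.univ \ D, t.choose s * C ^ (n - 1) := by
          refine Finset.sum_le_sum fun j hj => key j ?_
          exact (Finset.mem_sdiff.mp hj).2
      _ = (Finset.univ \ D).card * (t.choose s * C ^ (n - 1)) := by
          rw [Finset.sum_const, smul_eq_mul]
      _ ≤ n * (t.choose s * C ^ (n - 1)) := by
          refine Nat.mul_le_mul_right _ (le_trans (Finset.card_le_univ _) ?_)
          simp
  rcases Nat.eq_zero_or_pos n with hn | hn
  · have hBempty : B = ∅ := by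
      rw [hB]
      refine Finset.filter_eq_empty_iff.mpr fun S _ => ?_
      exact not_not.mpr fun j _ => (hn ▸ j).elim0
    subst hn
    simp [hBempty]
  · have hfinal_nat : 2 ^ s * t.choose s ≤ C := two_pow_choose_le t s hst
    have hCposR : (0 : ℝ) < (C : ℝ) := by exact_mod_cast hCpos
    have h2 : (t.choose s : ℝ) ≤ (1 / 2 : ℝ) ^ s * C := by
      have hcast : (2 : ℝ) ^ s * (t.choose s : ℝ) ≤ (C : ℝ) := by exact_mod_cast hfinal_nat
      rw [one_div, inv_pow, ← div_eq_inv_mul, le_div_iff₀ (by positivity)]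
      linarith
    rw [hΩcard]
    push_cast
    rw [div_le_iff₀ (by positivity)]
    calc ((B.card : ℝ)) ≤ (n : ℝ) * ((t.choose s : ℝ) * (C : ℝ) ^ (n - 1)) := by
          exact_mod_cast hBcard
      _ ≤ (n : ℝ) * ((1 / 2 : ℝ) ^ s * (C : ℝ) * (C : ℝ) ^ (n - 1)) := by
          refine mul_le_mul_of_nonneg_left ?_ (by positivity)
          exact mul_le_mul_of_nonneg_right h2 (by positivity)
      _ = (n : ℝ) * (1 / 2 : ℝ) ^ s * ((C : ℝ) ^ (n - 1) * (C : ℝ)) := by ring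
      _ = (n : ℝ) * (1 / 2 : ℝ) ^ s * (C : ℝ) ^ (n - 1 + 1) := by rw [pow_succ]
      _ = (n : ℝ) * (1 / 2 : ℝ) ^ s * (C : ℝ) ^ n := by rw [Nat.sub_add_cancel hn]
end

section
/- Let n ≥ 2, d ≥ 1, and let t be a positive multiple of d with t ≥ 2 * d * log₂ n. Then for any fixed set D ⊆ Fin n with |D| ≤ d, the random design on n items with 2t tests and column-sparsity t/d is D-distinguishing with probability at least 1 − 1/n. -/
/-!
For `j ∉ D` the column `S j` fails to distinguish `j` from `D` only if it lies inside
`⋃_{k ∈ D} S k`, a set of at most `d s = t` of the `2t` tests (`s = t / d`). Conditioning on the other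
columns, this has probability at most `C(t, s) / C(2t, s) ≤ 2⁻ˢ ≤ 1 / n²`, because
`t ≥ 2 d log₂ n` means `s ≥ 2 log₂ n`. A union bound over the at most `n` items outside `D`
gives failure probability at most `1 / n`.
-/

open Finset

theorem Nat.pow_mul_descFactorial_le_descFactorial_mul (k t s : ℕ) :
    k ^ s * t.descFactorial s ≤ (k * t).descFactorial s := by
  induction s with
  | zero => simp
  | succ s ih =>
    rw [Nat.descFactorial_succ, Nat.descFactorial_succ, pow_succ]
    have hstep : k * (t - s) ≤ k * t - s := by
      rcases Nat.eq_zero_or_pos k with rfl | hk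
      · simp
      · rw [Nat.mul_sub]
        have := Nat.le_mul_of_pos_left s hk
        omega
    calc k ^ s * k * ((t - s) * t.descFactorial s)
        = k * (t - s) * (k ^ s * t.descFactorial s) := by ring
      _ ≤ (k * t - s) * (k * t).descFactorial s := Nat.mul_le_mul hstep ih

theorem Nat.pow_mul_choose_le_choose_mul (k t s : ℕ) :
    k ^ s * t.choose s ≤ (k * t).choose s := by
  have h := Nat.pow_mul_descFactorial_le_descFactorial_mul k t s
  rw [Nat.descFactorial_eq_factorial_mul_choose, Nat.descFactorial_eq_factorial_mul_choose,
    mul_left_comm] at h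
  exact Nat.le_of_mul_le_mul_left h s.factorial_pos

theorem Nat.sq_le_two_pow_of_two_mul_logb_le {n s : ℕ} (hn : 0 < n)
    (h : 2 * Real.logb 2 n ≤ s) : n ^ 2 ≤ 2 ^ s := by
  have hn' : (0 : ℝ) < n ^ 2 := by positivity
  have := (Real.logb_le_iff_le_rpow (y := s) one_lt_two hn').1
    (by rwa [Real.logb_pow, Nat.cast_ofNat])
  rw [Real.rpow_natCast] at this
  exact_mod_cast this

theorem Finset.one_sub_one_div_le_card_filter_div {β : Type*} {s : Finset β} (hs : s.Nonempty)
    (p : β → Prop) [DecidablePred p] {n : ℕ} (hn : 0 < n) (h : n * #{x ∈ s | ¬p x} ≤ #s) :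
    1 - 1 / (n : ℝ) ≤ #{x ∈ s | p x} / #s := by
  have hs' : (0 : ℝ) < #s := by exact_mod_cast hs.card_pos
  have hsplit : (#{x ∈ s | p x} : ℝ) = #s - #{x ∈ s | ¬p x} := by
    rw [← card_filter_add_card_filter_not (s := s) p]
    push_cast
    ring
  rw [hsplit, sub_div, div_self hs'.ne', sub_le_sub_iff_left, div_le_div_iff₀ hs' (by positivity)]
  exact_mod_cast (by linarith : #{x ∈ s | ¬p x} * n ≤ 1 * #s)

section Design

variable {ι α : Type*} [Fintype ι] [DecidableEq ι] [Fintype α]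

theorem filter_forall_card_eq_eq_piFinset (s : ℕ)
    [DecidablePred fun S : ι → Finset α => ∀ i, #(S i) = s] :
    ({S : ι → Finset α | ∀ i, #(S i) = s} : Finset _) =
      Fintype.piFinset fun _ => powersetCard s univ := by
  ext S
  simp

theorem card_piFinset_powersetCard (s : ℕ) :
    #(Fintype.piFinset fun _ : ι => powersetCard s (univ : Finset α)) =
      (Fintype.card α).choose s ^ Fintype.card ι := by
  simp

theorem card_piFinset_update_singleton (s : ℕ) (j : ι) (x : Finset α) :
    #(Fintype.piFinset (Function.update (fun _ : ι => powersetCard s (univ : Finset α)) j {x})) =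
      (Fintype.card α).choose s ^ (Fintype.card ι - 1) := by
  rw [Fintype.card_piFinset]
  simp [Function.apply_update (fun _ (u : Finset (Finset α)) => #u),
    prod_update_of_mem (mem_univ j), sdiff_singleton_eq_erase]

variable [DecidableEq α]

theorem card_filter_not_distinguishing_le (Ω : Finset (ι → Finset α)) (D : Finset ι) :
    #{S ∈ Ω | ¬∀ j ∉ D, ∃ i ∈ S j, ∀ k ∈ D, i ∉ S k} ≤
      ∑ j ∈ Dᶜ, #{S ∈ Ω | S j ⊆ D.biUnion S} := by
  refine (card_le_card fun S hS => ?_).trans card_biUnion_le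
  simp only [mem_filter, not_forall, not_exists, not_and, not_not] at hS
  obtain ⟨hSΩ, j, hj, hcov⟩ := hS
  exact mem_biUnion.2
    ⟨j, mem_compl.2 hj, mem_filter.2 ⟨hSΩ, fun i hi => by simpa using hcov i hi⟩⟩

/-- Erasing column `j` leaves `D.biUnion S` unchanged, and over each erased design the
column `S j` ranges over `s`-subsets of that union. -/
theorem card_filter_subset_biUnion_le {s m : ℕ} {D : Finset ι} {j : ι} (hj : j ∉ D)
    (hm : #D * s ≤ m) :
    #{S ∈ Fintype.piFinset (fun _ : ι => powersetCard s (univ : Finset α)) | S j ⊆ D.biUnion S}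
      ≤ m.choose s * (Fintype.card α).choose s ^ (Fintype.card ι - 1) := by
  rw [← card_piFinset_update_singleton s j ∅]
  refine card_le_mul_card_image_of_maps_to (f := fun S => Function.update S j ∅) ?_ _ ?_
  · intro S hS
    simp only [mem_filter, Fintype.mem_piFinset] at hS ⊢
    intro i
    rcases eq_or_ne i j with rfl | hij
    · simp
    · simpa [hij] using hS.1 i
  · intro g hg
    have hgD : ∀ k ∈ D, #(g k) = s := fun k hk => by
      simpa [Function.update_of_ne (ne_of_mem_of_not_mem hk hj)] using
        Fintype.mem_piFinset.1 hg k
    calc #{S ∈ _ | Function.update S j ∅ = g}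
        ≤ #(powersetCard s (D.biUnion g)) := by
          refine card_le_card_of_injOn (fun S => S j) ?_ ?_
          · intro S hS
            simp only [coe_filter, mem_filter, Fintype.mem_piFinset] at hS
            obtain ⟨⟨hScard, hSsub⟩, rfl⟩ := hS
            have hD : D.biUnion (Function.update S j ∅) = D.biUnion S :=
              biUnion_congr rfl fun k hk => Function.update_of_ne (ne_of_mem_of_not_mem hk hj) _ _
            simpa [hD, mem_powersetCard] using And.intro hSsub (hScard j)
          · intro S₁ hS₁ S₂ hS₂ h
            simp only [coe_filter, mem_filter] at hS₁ hS₂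
            have hS : ∀ S : ι → Finset α, S = Function.update (Function.update S j ∅) j (S j) := by
              simp
            rw [hS S₁, hS S₂, hS₁.2, hS₂.2, show S₁ j = S₂ j from h]
      _ = (#(D.biUnion g)).choose s := card_powersetCard _ _
      _ ≤ m.choose s := by
        refine Nat.choose_le_choose s (card_biUnion_le.trans ?_)
        simpa using (sum_le_card_nsmul D _ s fun k hk => (hgD k hk).le).trans hm

theorem card_mul_card_filter_not_distinguishing_le {s m : ℕ} {D : Finset ι} (hm : #D * s ≤ m)
    (hchoose : Fintype.card ι ^ 2 * m.choose s ≤ (Fintype.card α).choose s) :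
    Fintype.card ι * #{S ∈ Fintype.piFinset (fun _ : ι => powersetCard s (univ : Finset α)) |
        ¬∀ j ∉ D, ∃ i ∈ S j, ∀ k ∈ D, i ∉ S k} ≤
      #(Fintype.piFinset fun _ : ι => powersetCard s (univ : Finset α)) := by
  set N := Fintype.card ι
  set C := (Fintype.card α).choose s
  have hunion := (card_filter_not_distinguishing_le
    (Fintype.piFinset fun _ : ι => powersetCard s (univ : Finset α)) D).trans
      (sum_le_card_nsmul _ _ _ fun j hj => card_filter_subset_biUnion_le (mem_compl.1 hj) hm)
  rw [card_piFinset_powersetCard, smul_eq_mul] at *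
  rcases Nat.eq_zero_or_pos N with hN | hN
  · simp [hN]
  calc N * #{S ∈ _ | _}
      ≤ N * (N * (m.choose s * C ^ (N - 1))) :=
        Nat.mul_le_mul_left N (hunion.trans (Nat.mul_le_mul_right _ (card_le_univ _)))
    _ = N ^ 2 * m.choose s * C ^ (N - 1) := by ring
    _ ≤ C * C ^ (N - 1) := Nat.mul_le_mul_right _ hchoose
    _ = C ^ N := by rw [← pow_succ', Nat.sub_add_cancel hN]

end Design

theorem prob_distinguishing_ge_general (n t d : ℕ) (hn : 2 ≤ n) (hd : 1 ≤ d)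
    (hdvd : d ∣ t) (htb : 2 * (d : ℝ) * Real.logb 2 n ≤ t)
    (D : Finset (Fin n)) (hD : D.card ≤ d) :
    1 - 1 / (n : ℝ) ≤
      (((Finset.univ.filter
            (fun S : Fin n → Finset (Fin (2 * t)) => ∀ i, (S i).card = t / d)).filter
          (fun S => ∀ j ∉ D, ∃ i ∈ S j, ∀ k ∈ D, i ∉ S k)).card : ℝ) /
        ((Finset.univ.filter
            (fun S : Fin n → Finset (Fin (2 * t)) => ∀ i, (S i).card = t / d)).card : ℝ) := by
  obtain ⟨s, rfl⟩ := hdvd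
  rw [Nat.mul_div_cancel_left s hd, filter_forall_card_eq_eq_piFinset]
  have hs : 2 * Real.logb 2 n ≤ s := by
    have hd' : (0 : ℝ) < d := by exact_mod_cast hd
    push_cast at htb
    nlinarith
  have hchoose : n ^ 2 * (d * s).choose s ≤ (2 * (d * s)).choose s :=
    (Nat.mul_le_mul_right _ (Nat.sq_le_two_pow_of_two_mul_logb_le (by omega) hs)).trans
      (Nat.pow_mul_choose_le_choose_mul 2 (d * s) s)
  have hs2t : s ≤ Fintype.card (Fin (2 * (d * s))) := by
    rw [Fintype.card_fin]
    nlinarith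
  refine one_sub_one_div_le_card_filter_div ?_ _ (by omega) ?_
  · rw [← card_pos, card_piFinset_powersetCard]
    exact pow_pos (Nat.choose_pos hs2t) _
  · simpa using card_mul_card_filter_not_distinguishing_le (α := Fin (2 * (d * s)))
      (Nat.mul_le_mul_right s hD) (by simpa using hchoose)

/-- Let `n ≥ 2`, `d ≥ 1`, and `t` a positive multiple of `d` with
`t ≥ 2·d·log₂ n`.  For any fixed `D ⊆ Fin n` with `|D| ≤ d`, the random design
on `n` items with `2t` tests and column-sparsity `t/d` is `D`-distinguishing
with probability at least `1 - 1/n`. -/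
theorem prob_distinguishing_ge (n t d : ℕ) (hn : 2 ≤ n) (hd : 1 ≤ d)
    (ht : 0 < t) (hdvd : d ∣ t) (htb : 2 * (d : ℝ) * Real.logb 2 n ≤ t)
    (D : Finset (Fin n)) (hD : D.card ≤ d) :
    1 - 1 / (n : ℝ) ≤
      (((Finset.univ.filter
            (fun S : Fin n → Finset (Fin (2 * t)) => ∀ i, (S i).card = t / d)).filter
          (fun S => ∀ j ∉ D, ∃ i ∈ S j, ∀ k ∈ D, i ∉ S k)).card : ℝ) /
        ((Finset.univ.filter
            (fun S : Fin n → Finset (Fin (2 * t)) => ∀ i, (S i).card = t / d)).card : ℝ) :=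
  prob_distinguishing_ge_general n t d hn hd hdvd htb D hD
end

section
/- Let n ≥ 2, d ≥ 1, g ≥ 1, and let t be a positive multiple of d with t ≥ 2 * d * log₂ n + d * log₂ g. Then for any given collection 𝒟 = {D₁, …, D_g} of g (not necessarily distinct) subsets of Fin n, each of size at most d, the random design on n items with 2t tests and column-sparsity t/d is 𝒟-distinguished (i.e., simultaneously Dᵢ-distinguishing for every i ∈ {1,…,g}) with probability at least 1 − 1/n. -/
/-!
Fix a set `D` of at most `d` items and an item `j ∉ D`, and condition on every column except the
`j`-th. The columns of `D` then cover at most `d·s = t` of the `2t` tests, so the uniformly random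
`s`-subset `S j` lies inside their union with probability at most `C(t,s)/C(2t,s) ≤ 2^{-s}`.
A union bound over the at most `g·n` pairs `(Dᵢ, j)` bounds the failure probability by
`g·n·2^{-s}`, and the hypothesis on `t` says precisely that `n²·g ≤ 2^s`.
-/

open Finset Function Fintype

namespace Nat

theorem pow_mul_descFactorial_le_descFactorial_mul_s6 (k m s : ℕ) :
    k ^ s * m.descFactorial s ≤ (k * m).descFactorial s := by
  induction s with
  | zero => simp
  | succ s ih =>
    rw [descFactorial_succ, descFactorial_succ, pow_succ]
    have hstep : k * (m - s) ≤ k * m - s := by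
      rcases k.eq_zero_or_pos with rfl | hk
      · simp
      · rw [Nat.mul_sub]; have := Nat.le_mul_of_pos_left s hk; omega
    calc k ^ s * k * ((m - s) * m.descFactorial s)
        = (k * (m - s)) * (k ^ s * m.descFactorial s) := by ring
      _ ≤ (k * m - s) * (k * m).descFactorial s := Nat.mul_le_mul hstep ih

theorem pow_mul_choose_le_choose_mul_s6 (k m s : ℕ) : k ^ s * m.choose s ≤ (k * m).choose s := by
  have h := pow_mul_descFactorial_le_descFactorial_mul_s6 k m s
  rw [descFactorial_eq_factorial_mul_choose, descFactorial_eq_factorial_mul_choose,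
    mul_left_comm] at h
  exact Nat.le_of_mul_le_mul_left h s.factorial_pos

end Nat

namespace Finset

variable {ι : Type*} [Fintype ι] [DecidableEq ι] {β : ι → Type*} [∀ i, DecidableEq (β i)]

/-- If, conditionally on all coordinates but the `j`-th, `P` holds with probability at most
`m / #(A j)`, then it does so unconditionally. -/
theorem card_filter_piFinset_mul_card_le (A : ∀ i, Finset (β i)) (j : ι)
    (P : (∀ i, β i) → Prop) [DecidablePred P] (m : ℕ)
    (h : ∀ T ∈ piFinset A, #{x ∈ A j | P (update T j x)} ≤ m) :
    #{S ∈ piFinset A | P S} * #(A j) ≤ m * #(piFinset A) := by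
  rw [← card_product]
  refine card_le_mul_card_image_of_maps_to (f := fun p => update p.1 j p.2) ?_ m fun T hT => ?_
  · rintro ⟨S, x⟩ hSx
    simp only [mem_product, mem_filter, mem_piFinset] at hSx ⊢
    intro i
    rcases eq_or_ne i j with rfl | hi
    · simpa using hSx.2
    · simpa [hi] using hSx.1.1 i
  · refine (card_le_card_of_injOn (fun p => p.1 j) ?_ ?_).trans (h T hT)
    · rintro ⟨S, x⟩ hSx
      simp only [coe_filter, mem_product, mem_filter, mem_piFinset, Set.mem_ofPred_eq] at hSx
      obtain ⟨⟨⟨hS, hP⟩, -⟩, rfl⟩ := hSx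
      simpa [hS j] using hP
    · rintro ⟨S, x⟩ hSx ⟨S', x'⟩ hSx' (hj : S j = S' j)
      simp only [coe_filter, mem_product, mem_filter, Set.mem_ofPred_eq] at hSx hSx'
      obtain ⟨-, rfl⟩ := hSx
      refine Prod.ext ?_ (by simpa using (congrFun hSx'.2 j).symm)
      calc S = update (update S j x) j (S j) := by simp
        _ = S' := by rw [← hSx'.2, hj]; simp

end Finset

section Designs

variable {ι α : Type*} [Fintype ι] [DecidableEq ι] [Fintype α]

variable (ι α) in
def weightDesigns (s : ℕ) : Finset (ι → Finset α) :=
  piFinset fun _ => powersetCard s univ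

theorem mem_weightDesigns {s : ℕ} {S : ι → Finset α} :
    S ∈ weightDesigns ι α s ↔ ∀ i, #(S i) = s := by
  simp [weightDesigns, mem_powersetCard]

theorem card_weightDesigns (s : ℕ) :
    #(weightDesigns ι α s) = (card α).choose s ^ card ι := by
  simp [weightDesigns, card_powersetCard]

theorem filter_forall_card_eq_eq_weightDesigns (s : ℕ)
    [DecidablePred fun S : ι → Finset α => ∀ i, #(S i) = s] :
    univ.filter (fun S : ι → Finset α => ∀ i, #(S i) = s) = weightDesigns ι α s := by
  ext S
  simp [mem_weightDesigns]

theorem card_filter_not_distinguishable_update_le [DecidableEq α] {D : Finset ι} {j : ι}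
    (hj : j ∉ D) {s : ℕ} {T : ι → Finset α} (hT : T ∈ weightDesigns ι α s) :
    #{x ∈ powersetCard s (univ : Finset α) | ¬ ∃ a ∈ x, ∀ k ∈ D, a ∉ update T j x k} ≤
      (#D * s).choose s := by
  have hsub : {x ∈ powersetCard s (univ : Finset α) | ¬ ∃ a ∈ x, ∀ k ∈ D, a ∉ update T j x k} ⊆
      powersetCard s (D.biUnion T) := by
    intro x hx
    simp only [mem_filter, mem_powersetCard] at hx ⊢
    push Not at hx
    refine ⟨fun a ha => ?_, hx.1.2⟩
    obtain ⟨k, hk, hak⟩ := hx.2 a ha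
    rw [update_of_ne (ne_of_mem_of_not_mem hk hj)] at hak
    exact mem_biUnion.2 ⟨k, hk, hak⟩
  have hunion : #(D.biUnion T) ≤ #D * s :=
    card_biUnion_le_card_mul D T s fun k _ => (mem_weightDesigns.1 hT k).le
  calc _ ≤ #(powersetCard s (D.biUnion T)) := card_le_card hsub
    _ ≤ (#D * s).choose s := by rw [card_powersetCard]; exact Nat.choose_le_choose s hunion

theorem two_pow_mul_card_filter_not_distinguishable_le [DecidableEq α] {D : Finset ι} {j : ι}
    (hj : j ∉ D) {s : ℕ} (hs : s ≤ card α) (hD : 2 * (#D * s) ≤ card α) :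
    2 ^ s * #{S ∈ weightDesigns ι α s | ¬ ∃ a ∈ S j, ∀ k ∈ D, a ∉ S k} ≤
      #(weightDesigns ι α s) := by
  have hcond : #{S ∈ weightDesigns ι α s | ¬ ∃ a ∈ S j, ∀ k ∈ D, a ∉ S k} * (card α).choose s ≤
      (#D * s).choose s * #(weightDesigns ι α s) := by
    have h := card_filter_piFinset_mul_card_le
      (fun _ => powersetCard s (univ : Finset α)) j (fun S => ¬ ∃ a ∈ S j, ∀ k ∈ D, a ∉ S k) _
      fun T hT => by simpa only [update_self] using card_filter_not_distinguishable_update_le hj hT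
    rwa [card_powersetCard, card_univ] at h
  have hchoose : 2 ^ s * (#D * s).choose s ≤ (card α).choose s :=
    (Nat.pow_mul_choose_le_choose_mul_s6 2 _ s).trans (Nat.choose_le_choose s hD)
  refine Nat.le_of_mul_le_mul_right ?_ (Nat.choose_pos hs)
  calc _ ≤ 2 ^ s * ((#D * s).choose s * #(weightDesigns ι α s)) := by
        rw [mul_assoc]; exact Nat.mul_le_mul_left _ hcond
    _ ≤ _ := by rw [← mul_assoc, mul_comm #(weightDesigns ι α s)]; gcongr

theorem two_pow_mul_card_filter_not_distinguished_le [DecidableEq α] {γ : Type*} [Fintype γ]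
    (D : γ → Finset ι) {s : ℕ} (hs : s ≤ card α) (hD : ∀ i, 2 * (#(D i) * s) ≤ card α) :
    2 ^ s * #{S ∈ weightDesigns ι α s | ¬ ∀ i, ∀ j ∉ D i, ∃ a ∈ S j, ∀ k ∈ D i, a ∉ S k} ≤
      card γ * card ι * #(weightDesigns ι α s) := by
  set pairs := univ.filter fun p : γ × ι => p.2 ∉ D p.1
  set bad := fun p : γ × ι => {S ∈ weightDesigns ι α s | ¬ ∃ a ∈ S p.2, ∀ k ∈ D p.1, a ∉ S k}
  have hsub : {S ∈ weightDesigns ι α s | ¬ ∀ i, ∀ j ∉ D i, ∃ a ∈ S j, ∀ k ∈ D i, a ∉ S k} ⊆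
      pairs.biUnion bad := by
    intro S hS
    simp only [mem_filter, not_forall, exists_prop] at hS
    obtain ⟨hSΩ, i, j, hj, hnot⟩ := hS
    exact mem_biUnion.2 ⟨(i, j), by simpa [pairs] using hj, mem_filter.2 ⟨hSΩ, hnot⟩⟩
  calc _ ≤ 2 ^ s * ∑ p ∈ pairs, #(bad p) :=
        Nat.mul_le_mul_left _ ((card_le_card hsub).trans card_biUnion_le)
    _ ≤ ∑ _p ∈ pairs, #(weightDesigns ι α s) := by
        rw [mul_sum]
        exact sum_le_sum fun p hp =>
          two_pow_mul_card_filter_not_distinguishable_le (mem_filter.1 hp).2 hs (hD p.1)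
    _ ≤ card γ * card ι * #(weightDesigns ι α s) := by
        rw [sum_const, smul_eq_mul, ← card_prod]
        exact Nat.mul_le_mul_right _ (card_filter_le _ _)

end Designs

theorem Finset.one_sub_le_div_card_filter {β : Type*} {Ω : Finset β} (hΩ : Ω.Nonempty)
    (P : β → Prop) [DecidablePred P] {ε : ℝ} (h : (#{x ∈ Ω | ¬ P x} : ℝ) ≤ ε * #Ω) :
    1 - ε ≤ #{x ∈ Ω | P x} / #Ω := by
  have hsplit : (#{x ∈ Ω | P x} : ℝ) + #{x ∈ Ω | ¬ P x} = #Ω := by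
    exact_mod_cast card_filter_add_card_filter_not P
  rw [le_div_iff₀ (by exact_mod_cast hΩ.card_pos)]
  linarith

theorem Real.sq_mul_le_two_pow_of_logb_le {x y : ℝ} (hx : 0 < x) (hy : 0 < y) {s : ℕ}
    (h : 2 * logb 2 x + logb 2 y ≤ s) : x ^ 2 * y ≤ 2 ^ s := by
  rw [← rpow_natCast 2 s, ← logb_le_iff_le_rpow one_lt_two (by positivity),
    logb_mul (by positivity) hy.ne', logb_pow]
  exact_mod_cast h

theorem prob_collection_distinguished_ge_general (n t d g : ℕ) (hn : 2 ≤ n) (hd : 1 ≤ d)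
    (hg : 1 ≤ g) (hdvd : d ∣ t)
    (htb : 2 * (d : ℝ) * Real.logb 2 n + (d : ℝ) * Real.logb 2 g ≤ t)
    (D : Fin g → Finset (Fin n)) (hD : ∀ i, (D i).card ≤ d) :
    1 - 1 / (n : ℝ) ≤
      (((Finset.univ.filter
            (fun S : Fin n → Finset (Fin (2 * t)) => ∀ i, (S i).card = t / d)).filter
          (fun S => ∀ i : Fin g, ∀ j ∉ D i, ∃ a ∈ S j, ∀ k ∈ D i, a ∉ S k)).card : ℝ) /
        ((Finset.univ.filter
            (fun S : Fin n → Finset (Fin (2 * t)) => ∀ i, (S i).card = t / d)).card : ℝ) := by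
  set s := t / d
  have hds : d * s = t := Nat.mul_div_cancel' hdvd
  have hs : s ≤ card (Fin (2 * t)) := by
    rw [Fintype.card_fin]; exact (Nat.div_le_self t d).trans (by omega)
  have hD' : ∀ i, 2 * (#(D i) * s) ≤ card (Fin (2 * t)) := fun i => by
    rw [Fintype.card_fin, ← hds]; exact Nat.mul_le_mul_left 2 (Nat.mul_le_mul_right s (hD i))
  have hlog : 2 * Real.logb 2 n + Real.logb 2 g ≤ s := by
    have hdpos : (0 : ℝ) < d := by exact_mod_cast hd
    refine le_of_mul_le_mul_left ?_ hdpos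
    rw [← Nat.cast_mul, hds]; linarith
  have hnpos : (0 : ℝ) < n := by exact_mod_cast (by omega : 0 < n)
  have hkey := Real.sq_mul_le_two_pow_of_logb_le hnpos (by exact_mod_cast hg) hlog
  have hbad := two_pow_mul_card_filter_not_distinguished_le D hs hD'
  have hΩ : (weightDesigns (Fin n) (Fin (2 * t)) s).Nonempty := by
    rw [← Finset.card_pos, card_weightDesigns]
    exact Nat.pow_pos (Nat.choose_pos hs)
  have hbad_real : (#{S ∈ weightDesigns (Fin n) (Fin (2 * t)) s |
      ¬ ∀ i : Fin g, ∀ j ∉ D i, ∃ a ∈ S j, ∀ k ∈ D i, a ∉ S k} : ℝ) ≤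
      g * n / 2 ^ s * #(weightDesigns (Fin n) (Fin (2 * t)) s) := by
    rw [div_mul_eq_mul_div, le_div_iff₀ (by positivity), mul_comm]
    simpa using (Nat.cast_le (α := ℝ)).2 hbad
  rw [filter_forall_card_eq_eq_weightDesigns]
  refine le_trans ?_ (one_sub_le_div_card_filter hΩ _ hbad_real)
  rw [sub_le_sub_iff_left, div_le_div_iff₀ (by positivity) hnpos]
  nlinarith [hkey]

/-- Let `n ≥ 2`, `d ≥ 1`, `g ≥ 1`, and `t` a positive multiple of
`d` with `t ≥ 2·d·log₂ n + d·log₂ g`.  For any given collection `D₁, …, D_g` of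
`g` (not necessarily distinct) subsets of `Fin n`, each of size at most `d`, the
random design on `n` items with `2t` tests and column-sparsity `t/d` is
simultaneously `Dᵢ`-distinguishing for every `i` with probability at least
`1 - 1/n`. -/
theorem prob_collection_distinguished_ge (n t d g : ℕ) (hn : 2 ≤ n) (hd : 1 ≤ d)
    (hg : 1 ≤ g) (ht : 0 < t) (hdvd : d ∣ t)
    (htb : 2 * (d : ℝ) * Real.logb 2 n + (d : ℝ) * Real.logb 2 g ≤ t)
    (D : Fin g → Finset (Fin n)) (hD : ∀ i, (D i).card ≤ d) :
    1 - 1 / (n : ℝ) ≤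
      (((Finset.univ.filter
            (fun S : Fin n → Finset (Fin (2 * t)) => ∀ i, (S i).card = t / d)).filter
          (fun S => ∀ i : Fin g, ∀ j ∉ D i, ∃ a ∈ S j, ∀ k ∈ D i, a ∉ S k)).card : ℝ) /
        ((Finset.univ.filter
            (fun S : Fin n → Finset (Fin (2 * t)) => ∀ i, (S i).card = t / d)).card : ℝ) :=
  prob_collection_distinguished_ge_general n t d g hn hd hg hdvd htb D hD
end

section
/- (Theorem 1) Let n ≥ 2, 1 ≤ d ≤ n, g ≥ 1, and let t be a positive multiple of d with t ≥ 2 * d * log₂ n + min (d * log₂ g) (d² * log₂ (Real.exp 1 * n / d)). Then for any given collection 𝒟 = {D₁, …, D_g} of g (not necessarily distinct) subsets of Fin n of size d, the random design on n items with 2t tests and column-sparsity t/d is 𝒟-distinguished (i.e., simultaneously Dᵢ-distinguishing for every i) with probability at least 1 − 1/n. -/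
open Finset

private lemma two_pow_mul_descFactorial (t : ℕ) :
    ∀ s, s ≤ t → 2 ^ s * t.descFactorial s ≤ (2 * t).descFactorial s := by
  intro s
  induction s with
  | zero => intro _; simp
  | succ k ih =>
    intro hs
    rw [Nat.descFactorial_succ, Nat.descFactorial_succ, pow_succ]
    calc 2 ^ k * 2 * ((t - k) * t.descFactorial k)
        = (2 * (t - k)) * (2 ^ k * t.descFactorial k) := by ring
      _ ≤ (2 * t - k) * ((2 * t).descFactorial k) :=
          Nat.mul_le_mul (by omega) (ih (by omega))

private lemma two_pow_mul_choose (t s : ℕ) (hs : s ≤ t) :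
    2 ^ s * t.choose s ≤ (2 * t).choose s := by
  rw [Nat.choose_eq_descFactorial_div_factorial, Nat.choose_eq_descFactorial_div_factorial,
    ← Nat.mul_div_assoc _ (Nat.factorial_dvd_descFactorial t s)]
  exact Nat.div_le_div_right (two_pow_mul_descFactorial t s hs)

private lemma card_pi_filter {ι : Type*} [Fintype ι] [DecidableEq ι] (m s : ℕ)
    [DecidablePred fun S : ι → Finset (Fin m) => ∀ i, (S i).card = s] :
    ((univ : Finset (ι → Finset (Fin m))).filter (fun S => ∀ i, (S i).card = s)).card
      = (m.choose s) ^ (Fintype.card ι) := by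
  classical
  rw [← Fintype.card_subtype]
  rw [Fintype.card_congr
    (Equiv.subtypePiEquivPi (p := fun (_ : ι) (A : Finset (Fin m)) => A.card = s))]
  simp [Fintype.card_finset_len, Fintype.card_fin]

private lemma bad_count {n m s u : ℕ} (E : Finset (Fin n)) (j : Fin n) (hj : j ∉ E)
    (hu : E.card * s ≤ u) :
    ((univ : Finset (Fin n → Finset (Fin m))).filter
        (fun S => (∀ i, (S i).card = s) ∧ S j ⊆ E.biUnion S)).card
      ≤ u.choose s * (m.choose s) ^ (n - 1) := by
  classical
  set B := (univ : Finset (Fin n → Finset (Fin m))).filter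
      (fun S => (∀ i, (S i).card = s) ∧ S j ⊆ E.biUnion S) with hB
  set f : (Fin n → Finset (Fin m)) → ({k : Fin n // k ≠ j} → Finset (Fin m)) :=
    fun S k => S k.1 with hf
  have hne : ∀ k ∈ E, k ≠ j := fun k hk h => hj (h ▸ hk)
  set U : ({k : Fin n // k ≠ j} → Finset (Fin m)) → Finset (Fin m) :=
    fun b => E.attach.biUnion (fun k => b ⟨k.1, hne k.1 k.2⟩) with hU
  have hUeq : ∀ S : Fin n → Finset (Fin m), U (f S) = E.biUnion S := by
    intro S
    ext a
    simp only [hU, hf, mem_biUnion, mem_attach, true_and, Subtype.exists]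
    constructor
    · rintro ⟨k, hk, ha⟩; exact ⟨k, hk, ha⟩
    · rintro ⟨k, hk, ha⟩; exact ⟨k, hk, ha⟩
  have hfiber : ∀ b ∈ B.image f, (B.filter (fun S => f S = b)).card ≤ u.choose s := by
    intro b hb
    obtain ⟨S₀, hS₀, rfl⟩ := mem_image.1 hb
    have hS₀' := (mem_filter.1 hS₀).2
    have hUcard : (U (f S₀)).card ≤ u := by
      refine le_trans (card_biUnion_le) (le_trans ?_ hu)
      calc ∑ k ∈ E.attach, (f S₀ ⟨k.1, hne k.1 k.2⟩).card
          = ∑ k ∈ E.attach, s := by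
            refine Finset.sum_congr rfl fun k _ => ?_
            exact hS₀'.1 k.1
        _ = E.card * s := by simp [mul_comm]
        _ ≤ E.card * s := le_rfl
    refine le_trans (Finset.card_le_card_of_injOn
      (t := Finset.powersetCard s (U (f S₀))) (fun S => S j)
      (fun S hS => ?_) (fun S hS T hT hST => ?_)) ?_
    · have hS' := mem_filter.1 hS
      have hmem := mem_filter.1 hS'.1
      refine mem_powersetCard.2 ⟨?_, hmem.2.1 j⟩
      have : U (f S) = E.biUnion S := hUeq S
      rw [hS'.2] at this
      rw [this]
      exact hmem.2.2
    · have hSb := (mem_filter.1 hS).2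
      have hTb := (mem_filter.1 hT).2
      funext k
      by_cases hk : k = j
      · rw [hk]; exact hST
      · have := congrFun (hSb.trans hTb.symm) ⟨k, hk⟩
        exact this
    · rw [Finset.card_powersetCard]
      exact Nat.choose_le_choose s hUcard
  refine le_trans (Finset.card_le_mul_card_image B (u.choose s) hfiber) ?_
  refine Nat.mul_le_mul_left _ ?_
  have himg : B.image f ⊆ (univ : Finset ({k : Fin n // k ≠ j} → Finset (Fin m))).filter
      (fun b => ∀ k, (b k).card = s) := by
    intro b hb
    obtain ⟨S, hS, rfl⟩ := mem_image.1 hb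
    have := (mem_filter.1 hS).2.1
    exact mem_filter.2 ⟨mem_univ _, fun k => this k.1⟩
  refine le_trans (Finset.card_le_card himg) ?_
  rw [card_pi_filter]
  have : Fintype.card {k : Fin n // k ≠ j} = n - 1 := by
    rw [Fintype.card_subtype_compl, Fintype.card_subtype_eq, Fintype.card_fin]
  rw [this]

private lemma fail_bound {n m s t d g : ℕ} (D : Fin g → Finset (Fin n))
    (ι : Type*) [Fintype ι] [DecidableEq ι] (E : ι → Finset (Fin n))
    (hEd : ∀ x, (E x).card = d) (hds : d * s ≤ t)
    (hcov : ∀ i : Fin g, ∃ x : ι, E x = D i) :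
    ((univ : Finset (Fin n → Finset (Fin m))).filter
      (fun S => (∀ i, (S i).card = s) ∧
        ¬ (∀ i : Fin g, ∀ j ∉ D i, ∃ a ∈ S j, ∀ k ∈ D i, a ∉ S k))).card
      ≤ (Fintype.card ι * n) * (t.choose s * (m.choose s) ^ (n - 1)) := by
  classical
  have hsub : ((univ : Finset (Fin n → Finset (Fin m))).filter
      (fun S => (∀ i, (S i).card = s) ∧
        ¬ (∀ i : Fin g, ∀ j ∉ D i, ∃ a ∈ S j, ∀ k ∈ D i, a ∉ S k)))
      ⊆ (univ : Finset (ι × Fin n)).biUnion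
      (fun p => univ.filter (fun S : Fin n → Finset (Fin m) =>
        ((∀ i, (S i).card = s) ∧ S p.2 ⊆ (E p.1).biUnion S) ∧ p.2 ∉ E p.1)) := by
    intro S hS
    obtain ⟨hsp, hbad⟩ := (mem_filter.1 hS).2
    push_neg at hbad
    obtain ⟨i, j, hjD, hbad⟩ := hbad
    obtain ⟨x, hx⟩ := hcov i
    refine mem_biUnion.2 ⟨(x, j), mem_univ _, mem_filter.2 ⟨mem_univ _, ⟨hsp, ?_⟩,
      by rw [hx]; exact hjD⟩⟩
    intro a ha
    obtain ⟨k, hk, hak⟩ := hbad a ha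
    rw [hx]
    exact mem_biUnion.2 ⟨k, hk, hak⟩
  refine le_trans (card_le_card hsub) (le_trans card_biUnion_le ?_)
  refine le_trans (Finset.sum_le_card_nsmul _ _ (t.choose s * (m.choose s) ^ (n - 1)) ?_) ?_
  · rintro ⟨x, j⟩ -
    by_cases hp : j ∉ E x
    · refine le_trans (card_le_card ?_) (bad_count (E x) j hp (by rw [hEd]; exact hds))
      intro S hS
      have := mem_filter.1 hS
      exact mem_filter.2 ⟨this.1, this.2.1⟩
    · have : (univ.filter (fun S : Fin n → Finset (Fin m) =>
        ((∀ i, (S i).card = s) ∧ S j ⊆ (E x).biUnion S) ∧ j ∉ E x)) = ∅ := by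
        refine filter_false_of_mem fun S _ => ?_
        simp only [not_and]
        intro _
        exact hp
      rw [this]
      simp
  · simp only [smul_eq_mul, card_univ, Fintype.card_prod, Fintype.card_fin]
    exact le_rfl

private lemma nat_bound_of_logb {N n s : ℕ} (hn : 2 ≤ n) (hN : 1 ≤ N)
    (h : 2 * Real.logb 2 n + Real.logb 2 N ≤ (s : ℝ)) :
    N * n * n ≤ 2 ^ s := by
  have hn0 : (0:ℝ) < n := by exact_mod_cast Nat.lt_of_lt_of_le Nat.zero_lt_two hn
  have hN0 : (0:ℝ) < N := by exact_mod_cast hN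
  have key : ((N * n * n : ℕ) : ℝ) ≤ ((2 ^ s : ℕ) : ℝ) := by
    push_cast
    have h1 : (N:ℝ) * n * n = (2:ℝ) ^ (Real.logb 2 ((N:ℝ) * n * n)) :=
      (Real.rpow_logb two_pos (by norm_num) (by positivity)).symm
    rw [h1, show ((2:ℝ)^(s:ℕ)) = (2:ℝ) ^ ((s:ℕ):ℝ) from (Real.rpow_natCast 2 s).symm]
    apply (Real.rpow_le_rpow_left_iff one_lt_two).2
    rw [Real.logb_mul (by positivity) (by positivity),
      Real.logb_mul (by positivity) (by positivity)]
    linarith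
  exact_mod_cast key

private lemma choose_le_e_pow (n d : ℕ) (hd : 1 ≤ d) :
    ((n.choose d : ℕ) : ℝ) ≤ (Real.exp 1 * n / d) ^ d := by
  have hd0 : (0:ℝ) < d := by exact_mod_cast hd
  have h1 : ((n.choose d : ℕ) : ℝ) ≤ ((n:ℝ)) ^ d / (Nat.factorial d : ℕ) := by
    have := Nat.choose_le_pow_div (α := ℝ) d n
    push_cast at this ⊢
    exact this
  have h2 : (d:ℝ) ^ d / (Nat.factorial d : ℕ) ≤ Real.exp d :=
    Real.pow_div_factorial_le_exp (x := (d:ℝ)) (by positivity) d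
  have hfac : (0:ℝ) < (Nat.factorial d : ℕ) := by exact_mod_cast Nat.factorial_pos d
  have hrw : (Real.exp 1 * n / d) ^ d = Real.exp d * (n:ℝ)^d / (d:ℝ)^d := by
    rw [div_pow, mul_pow, Real.exp_one_pow]
  rw [hrw]
  refine h1.trans ?_
  rw [div_le_div_iff₀ hfac (by positivity)]
  rw [div_le_iff₀ hfac] at h2
  have hn0 : (0:ℝ) ≤ (n:ℝ)^d := by positivity
  nlinarith [h2, hn0]

/-- Theorem 1: Let `n ≥ 2`, `1 ≤ d ≤ n`, `g ≥ 1`, and `t` a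
positive multiple of `d` with
`t ≥ 2·d·log₂ n + min (d·log₂ g) (d²·log₂(e·n/d))`.  For any given collection
`D₁, …, D_g` of `g` (not necessarily distinct) subsets of `Fin n` of size `d`,
the random design on `n` items with `2t` tests and column-sparsity `t/d` is
simultaneously `Dᵢ`-distinguishing for every `i` with probability at least
`1 - 1/n`. -/
theorem prob_distinguished_ge_of_min_bound (n t d g : ℕ) (hn : 2 ≤ n)
    (hd : 1 ≤ d) (hdn : d ≤ n) (hg : 1 ≤ g) (ht : 0 < t) (hdvd : d ∣ t)
    (htb : 2 * (d : ℝ) * Real.logb 2 n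
        + min ((d : ℝ) * Real.logb 2 g)
            ((d : ℝ) ^ 2 * Real.logb 2 (Real.exp 1 * n / d)) ≤ t)
    (D : Fin g → Finset (Fin n)) (hD : ∀ i, (D i).card = d) :
    1 - 1 / (n : ℝ) ≤
      (((Finset.univ.filter
            (fun S : Fin n → Finset (Fin (2 * t)) => ∀ i, (S i).card = t / d)).filter
          (fun S => ∀ i : Fin g, ∀ j ∉ D i, ∃ a ∈ S j, ∀ k ∈ D i, a ∉ S k)).card : ℝ) /
        ((Finset.univ.filter
            (fun S : Fin n → Finset (Fin (2 * t)) => ∀ i, (S i).card = t / d)).card : ℝ) := by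
  classical
  have hd0 : 0 < d := hd
  have hds : d * (t / d) = t := Nat.mul_div_cancel' hdvd
  have hst : t / d ≤ t := Nat.div_le_self t d
  set s := t / d with hs
  set m := 2 * t with hm
  set Ω := (Finset.univ.filter
      (fun S : Fin n → Finset (Fin m) => ∀ i, (S i).card = s)) with hΩ
  set G := Ω.filter (fun S => ∀ i : Fin g, ∀ j ∉ D i, ∃ a ∈ S j, ∀ k ∈ D i, a ∉ S k) with hG
  have hΩcard : Ω.card = (m.choose s) ^ n := by
    rw [hΩ, card_pi_filter]
    rw [Fintype.card_fin]
  -- split into good and bad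
  set F := Ω.filter (fun S => ¬ (∀ i : Fin g, ∀ j ∉ D i, ∃ a ∈ S j, ∀ k ∈ D i, a ∉ S k)) with hF
  have hsplit : G.card + F.card = Ω.card := by
    rw [hG, hF]
    exact Finset.card_filter_add_card_filter_not _
  -- real-logb consequence casting
  have hcast_ds : (d:ℝ) * (s:ℝ) = (t:ℝ) := by exact_mod_cast hds
  have hd0R : (0:ℝ) < d := by exact_mod_cast hd0
  -- main bound: exists N with both properties
  have main : ∃ N : ℕ, F.card ≤ (N * n) * (t.choose s * (m.choose s) ^ (n - 1))
      ∧ N * n * n ≤ 2 ^ s := by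
    rcases le_total ((d : ℝ) * Real.logb 2 g)
        ((d : ℝ) ^ 2 * Real.logb 2 (Real.exp 1 * n / d)) with hmin | hmin
    · -- N = g
      rw [min_eq_left hmin] at htb
      refine ⟨g, ?_, ?_⟩
      · have := fail_bound (m := m) (s := s) (t := t) (d := d) D (Fin g) D hD
          (le_of_eq hds) (fun i => ⟨i, rfl⟩)
        rw [Fintype.card_fin] at this
        refine le_trans (le_of_eq ?_) this
        rw [hF, hΩ, Finset.filter_filter]
      · refine nat_bound_of_logb hn hg ?_
        have h1 : (d:ℝ) * (2 * Real.logb 2 n + Real.logb 2 g) ≤ (d:ℝ) * s := by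
          rw [hcast_ds]; ring_nf; ring_nf at htb; linarith
        exact le_of_mul_le_mul_left h1 hd0R
    · -- N = n.choose d
      rw [min_eq_right hmin] at htb
      refine ⟨n.choose d, ?_, ?_⟩
      · have := fail_bound (m := m) (s := s) (t := t) (d := d) D
          {A : Finset (Fin n) // A.card = d} (fun A => A.1) (fun A => A.2)
          (le_of_eq hds) (fun i => ⟨⟨D i, hD i⟩, rfl⟩)
        rw [Fintype.card_finset_len, Fintype.card_fin] at this
        refine le_trans (le_of_eq ?_) this
        rw [hF, hΩ, Finset.filter_filter]
      · refine nat_bound_of_logb hn (Nat.choose_pos hdn) ?_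
        have hex : (0:ℝ) < Real.exp 1 * n / d := by
          have : (0:ℝ) < (n:ℝ) := by positivity
          positivity
        have hlogN : Real.logb 2 (n.choose d : ℕ) ≤ (d:ℝ) * Real.logb 2 (Real.exp 1 * n / d) := by
          have h1 : Real.logb 2 (n.choose d : ℕ) ≤ Real.logb 2 ((Real.exp 1 * n / d) ^ d) :=
            Real.logb_le_logb_of_le one_lt_two
              (by exact_mod_cast Nat.choose_pos hdn) (choose_le_e_pow n d hd)
          rwa [Real.logb_pow] at h1
        have h1 : (d:ℝ) * (2 * Real.logb 2 n + Real.logb 2 (n.choose d : ℕ)) ≤ (d:ℝ) * s := by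
          rw [hcast_ds]
          have h2 : (d:ℝ) * Real.logb 2 (n.choose d : ℕ)
              ≤ (d:ℝ)^2 * Real.logb 2 (Real.exp 1 * n / d) := by
            have := mul_le_mul_of_nonneg_left hlogN (le_of_lt hd0R)
            nlinarith [this]
          nlinarith [htb, h2]
        exact le_of_mul_le_mul_left h1 hd0R
  obtain ⟨N, hFb, hNb⟩ := main
  -- key nat inequality : F.card * n ≤ Ω.card
  have hkey : F.card * n ≤ Ω.card := by
    have hc1 : F.card * n ≤ (N * n * n) * (t.choose s * (m.choose s) ^ (n - 1)) := by
      calc F.card * n ≤ ((N * n) * (t.choose s * (m.choose s) ^ (n - 1))) * n :=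
            Nat.mul_le_mul_right n hFb
        _ = (N * n * n) * (t.choose s * (m.choose s) ^ (n - 1)) := by ring
    have hc2 : (N * n * n) * (t.choose s * (m.choose s) ^ (n - 1))
        ≤ (2 ^ s * t.choose s) * (m.choose s) ^ (n - 1) := by
      calc (N * n * n) * (t.choose s * (m.choose s) ^ (n - 1))
          = (N * n * n * t.choose s) * (m.choose s) ^ (n - 1) := by ring
        _ ≤ (2 ^ s * t.choose s) * (m.choose s) ^ (n - 1) :=
            Nat.mul_le_mul_right _ (Nat.mul_le_mul_right _ hNb)
    have hc3 : (2 ^ s * t.choose s) * (m.choose s) ^ (n - 1)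
        ≤ (m.choose s) * (m.choose s) ^ (n - 1) :=
      Nat.mul_le_mul_right _ (two_pow_mul_choose t s hst)
    have hc4 : (m.choose s) * (m.choose s) ^ (n - 1) = (m.choose s) ^ n := by
      rw [← pow_succ']
      congr 1
      omega
    rw [hΩcard, ← hc4]
    exact le_trans hc1 (le_trans hc2 hc3)
  -- positivity of Ω.card
  have hmCpos : 0 < m.choose s := Nat.choose_pos (le_trans hst (by omega))
  have hΩpos : 0 < Ω.card := by
    rw [hΩcard]
    exact pow_pos hmCpos n
  -- final real computation
  have hnR : (0:ℝ) < n := by positivity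
  have hΩR : (0:ℝ) < (Ω.card : ℝ) := by exact_mod_cast hΩpos
  have hGR : (G.card : ℝ) = (Ω.card : ℝ) - (F.card : ℝ) := by
    have h : ((G.card : ℕ) : ℝ) + ((F.card : ℕ) : ℝ) = ((Ω.card : ℕ) : ℝ) := by
      exact_mod_cast hsplit
    linarith
  have hFR : (F.card : ℝ) * n ≤ (Ω.card : ℝ) := by exact_mod_cast hkey
  rw [hGR, sub_div, div_self hΩR.ne']
  have hlast : (F.card : ℝ) / (Ω.card : ℝ) ≤ 1 / n := by
    rw [div_le_div_iff₀ hΩR hnR]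
    linarith [hFR]
  linarith
end

section
/- Let c ≥ 1, let R, X : Fin n → ZMod c, and let T ⊆ Fin n be a test support with b = |T|. Define r = |{ j : X j = R j }|, b_0 = |{ j ∈ T : X j = R j }|, and for each nonzero l ∈ ZMod c let r_l = |{ j : X j = Q_{T,l} j }| where Q_{T,l} j = R j + l for j ∈ T and R j otherwise. Then c * b_0 = b + (c − 1) * r − Σ_{l ≠ 0} r_l (as integers); in particular, the value b_0 is determined by the publicly known quantities b, r, and the query responses r_l. -/
/-- `c·b_0 = b + (c-1)·r - Σ_{l ≠ 0} r_l` as integers, where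
`b = |T|`, `r` is the Mastermind score of the reference string `R` against `X`,
`b_0 = |{j ∈ T : X j = R j}|`, and `r_l` is the score of the query `Q_{T,l}`
(equal to `R j + l` on `T` and `R j` elsewhere) against `X`.  Hence `b_0` is
determined by the publicly known quantities `b`, `r` and the responses `r_l`. -/
theorem matches_on_test_determined (n c : ℕ) [NeZero c]
    (R X : Fin n → ZMod c) (T : Finset (Fin n)) :
    (c : ℤ) * ((T.filter (fun j => X j = R j)).card : ℤ) =
      (T.card : ℤ)
        + ((c : ℤ) - 1) * ((Finset.univ.filter (fun j => X j = R j)).card : ℤ)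
        - ∑ l ∈ Finset.univ.filter (fun l : ZMod c => l ≠ 0),
            ((Finset.univ.filter
              (fun j => X j = if j ∈ T then R j + l else R j)).card : ℤ) := by
  classical
  have hb : (T.card : ℤ) = ∑ j : Fin n, (if j ∈ T then (1:ℤ) else 0) := by
    simp
  have hb0 : ((T.filter (fun j => X j = R j)).card : ℤ)
      = ∑ j : Fin n, (if j ∈ T then (if X j = R j then (1:ℤ) else 0) else 0) := by
    rw [Finset.card_filter]
    push_cast
    rw [← Finset.sum_filter (fun j => j ∈ T)]
    simp [Finset.filter_univ_mem]
  have hr : ((Finset.univ.filter (fun j => X j = R j)).card : ℤ)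
      = ∑ j : Fin n, (if X j = R j then (1:ℤ) else 0) := by
    rw [Finset.card_filter]; push_cast; rfl
  have hrl : ∀ l : ZMod c,
      ((Finset.univ.filter (fun j => X j = if j ∈ T then R j + l else R j)).card : ℤ)
      = ∑ j : Fin n, (if X j = (if j ∈ T then R j + l else R j) then (1:ℤ) else 0) := by
    intro l; rw [Finset.card_filter]; push_cast; rfl
  simp only [hb, hb0, hr, hrl]
  rw [Finset.sum_comm, Finset.mul_sum, Finset.mul_sum, ← Finset.sum_add_distrib,
    ← Finset.sum_sub_distrib]
  apply Finset.sum_congr rfl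
  intro j _
  by_cases hT : j ∈ T
  · simp only [hT, if_true]
    have heq : ∀ l : ZMod c, (if X j = R j + l then (1:ℤ) else 0)
        = (if l = X j - R j then (1:ℤ) else 0) := by
      intro l
      have h : (X j = R j + l) ↔ (l = X j - R j) :=
        ⟨fun h => by rw [h]; ring, fun h => by rw [h]; ring⟩
      simp only [h]
    simp only [heq]
    rw [Finset.sum_ite_eq' (Finset.univ.filter (fun l : ZMod c => l ≠ 0))]
    simp only [Finset.mem_filter, Finset.mem_univ, true_and, sub_ne_zero]
    by_cases hx : X j = R j
    · simp [hx]
    · simp [hx, Ne.symm hx]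
  · simp only [hT, if_false]
    rw [Finset.sum_const, nsmul_eq_mul]
    have hc : ((Finset.univ.filter (fun l : ZMod c => l ≠ 0)).card : ℤ) = (c:ℤ) - 1 := by
      have h1 : (Finset.univ.filter (fun l : ZMod c => l ≠ 0)).card = c - 1 := by
        rw [Finset.filter_ne']
        simp [ZMod.card]
      rw [h1]
      have := Nat.one_le_iff_ne_zero.2 (NeZero.ne c)
      push_cast [Nat.cast_sub this]
      ring
    rw [hc]; ring
end

section
/- Let c ≥ 2, let R, X : Fin n → ZMod c, and let S : Fin n → Finset (Fin T) be the column supports of a design with test supports T_k = { j : k ∈ S j } for k ∈ Fin T. For each nonzero l ∈ ZMod c let D_l(X) = { j : X j = R j + l }. Suppose that for every nonzero l ∈ ZMod c the design is D_l(X)-distinguishing. Then for every position j ∈ Fin n and every nonzero l ∈ ZMod c: X j = R j + l if and only if every test k with j ∈ T_k satisfies |{ j' ∈ T_k : X j' = R j' + l }| ≥ 1 (i.e., every test containing j is positive for shift l). Consequently X is exactly recovered from the shift-l positivity patterns of the tests. -/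
/-- Let `S : Fin n → Finset (Fin T)` be the column supports of a
design with test supports `T_k = {j : k ∈ S j}`, and for each nonzero shift `l`
let `D_l(X) = {j : X j = R j + l}`.  If the design is `D_l(X)`-distinguishing for
every nonzero `l`, then for every position `j` and nonzero shift `l`:
`X j = R j + l` iff every test containing `j` is positive for shift `l`,
i.e. `|{j' ∈ T_k : X j' = R j' + l}| ≥ 1` for every test `k` with `j ∈ T_k`.
Consequently `X` is exactly recovered from the shift-`l` positivity patterns. -/
theorem recover_string_of_distinguishing (n T c : ℕ) (hc : 2 ≤ c)
    (R X : Fin n → ZMod c) (S : Fin n → Finset (Fin T))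
    (hdist : ∀ l : ZMod c, l ≠ 0 → ∀ j, X j ≠ R j + l →
      ∃ i ∈ S j, ∀ k, X k = R k + l → i ∉ S k) :
    ∀ j : Fin n, ∀ l : ZMod c, l ≠ 0 →
      (X j = R j + l ↔ ∀ k : Fin T, k ∈ S j →
        1 ≤ ((Finset.univ.filter (fun j' => k ∈ S j')).filter
              (fun j' => X j' = R j' + l)).card) := by
  intro j l hl
  constructor
  · intro hx k hk
    have : j ∈ (Finset.univ.filter (fun j' => k ∈ S j')).filter
        (fun j' => X j' = R j' + l) := by simp [hk, hx]
    exact Finset.card_pos.mpr ⟨j, this⟩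
  · intro h
    by_contra hx
    obtain ⟨i, hi, hneg⟩ := hdist l hl j hx
    have := h i hi
    rw [Finset.one_le_card] at this
    obtain ⟨j', hj'⟩ := this
    simp only [Finset.mem_filter, Finset.mem_univ, true_and] at hj'
    exact hneg j' hj'.2 hj'.1
end

section
/- Let c ≥ 2, let R : Fin n → ZMod c be a reference string, and let S : Fin n → Finset (Fin T) be the column supports of a design with test supports T_k = { j : k ∈ S j }. For each k and each nonzero l ∈ ZMod c define the query Q_{k,l} by Q_{k,l} j = R j + l for j ∈ T_k and R j otherwise. Let X, X' : Fin n → ZMod c be two strings such that the design is D_l(X)-distinguishing and D_l(X')-distinguishing for every nonzero l ∈ ZMod c. If b(R, X) = b(R, X') and b(Q_{k,l}, X) = b(Q_{k,l}, X') for every test k ∈ Fin T and every nonzero l ∈ ZMod c, then X = X'. In other words, the responses to the reference query and the (c − 1) shifted queries per test uniquely determine the string. -/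
open Finset

lemma split_count {n T c : ℕ} (R Y : Fin n → ZMod c) (S : Fin n → Finset (Fin T))
    (i : Fin T) (l : ZMod c) :
    (univ.filter (fun j => (if i ∈ S j then R j + l else R j) = Y j)).card
      + (univ.filter (fun j : Fin n => i ∈ S j ∧ Y j = R j)).card
    = (univ.filter (fun j : Fin n => i ∈ S j ∧ Y j = R j + l)).card
      + (univ.filter (fun j => R j = Y j)).card := by
  classical
  have h1 : (univ.filter (fun j => (if i ∈ S j then R j + l else R j) = Y j))
      = (univ.filter (fun j : Fin n => i ∈ S j ∧ Y j = R j + l))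
        ∪ (univ.filter (fun j : Fin n => ¬ i ∈ S j ∧ Y j = R j)) := by
    ext j
    by_cases h : i ∈ S j <;> simp [h, eq_comm]
  have h2 : (univ.filter (fun j => R j = Y j))
      = (univ.filter (fun j : Fin n => i ∈ S j ∧ Y j = R j))
        ∪ (univ.filter (fun j : Fin n => ¬ i ∈ S j ∧ Y j = R j)) := by
    ext j
    by_cases h : i ∈ S j <;> simp [h, eq_comm]
  have d1 : Disjoint (univ.filter (fun j : Fin n => i ∈ S j ∧ Y j = R j + l))
      (univ.filter (fun j : Fin n => ¬ i ∈ S j ∧ Y j = R j)) := by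
    rw [Finset.disjoint_left]; intro a ha hb; simp at ha hb; tauto
  have d2 : Disjoint (univ.filter (fun j : Fin n => i ∈ S j ∧ Y j = R j))
      (univ.filter (fun j : Fin n => ¬ i ∈ S j ∧ Y j = R j)) := by
    rw [Finset.disjoint_left]; intro a ha hb; simp at ha hb; tauto
  rw [h1, h2, card_union_of_disjoint d1, card_union_of_disjoint d2]
  ring

/-- If the design (column supports `S`, test supports
`T_k = {j : k ∈ S j}`) is `D_l(X)`- and `D_l(X')`-distinguishing for every
nonzero shift `l`, and the Mastermind scores of the reference query `R` and all
shifted queries `Q_{k,l}` (equal to `R j + l` on `T_k` and `R j` elsewhere)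
agree on `X` and `X'`, then `X = X'`: the responses uniquely determine the
string. -/
theorem responses_determine_string (n T c : ℕ) (hc : 2 ≤ c)
    (R : Fin n → ZMod c) (S : Fin n → Finset (Fin T)) (X X' : Fin n → ZMod c)
    (hX : ∀ l : ZMod c, l ≠ 0 → ∀ j, X j ≠ R j + l →
      ∃ i ∈ S j, ∀ k, X k = R k + l → i ∉ S k)
    (hX' : ∀ l : ZMod c, l ≠ 0 → ∀ j, X' j ≠ R j + l →
      ∃ i ∈ S j, ∀ k, X' k = R k + l → i ∉ S k)
    (hr : (Finset.univ.filter (fun j => R j = X j)).card =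
          (Finset.univ.filter (fun j => R j = X' j)).card)
    (hq : ∀ k : Fin T, ∀ l : ZMod c, l ≠ 0 →
      (Finset.univ.filter (fun j => (if k ∈ S j then R j + l else R j) = X j)).card =
      (Finset.univ.filter (fun j => (if k ∈ S j then R j + l else R j) = X' j)).card) :
    X = X' := by
  classical
  haveI : NeZero c := ⟨by omega⟩
  -- per-test, per-shift counts agree
  have key : ∀ i : Fin T, ∀ l : ZMod c,
      (univ.filter (fun j : Fin n => i ∈ S j ∧ X j = R j + l)).card
      = (univ.filter (fun j : Fin n => i ∈ S j ∧ X' j = R j + l)).card := by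
    intro i
    -- relation for each l
    have P : ∀ l : ZMod c,
        (univ.filter (fun j : Fin n => i ∈ S j ∧ X j = R j + l)).card
          + (univ.filter (fun j : Fin n => i ∈ S j ∧ X' j = R j)).card
        = (univ.filter (fun j : Fin n => i ∈ S j ∧ X' j = R j + l)).card
          + (univ.filter (fun j : Fin n => i ∈ S j ∧ X j = R j)).card := by
      intro l
      by_cases hl : l = 0
      · simp [hl]; omega
      · have e1 := split_count R X S i l
        have e2 := split_count R X' S i l
        have h := hq i l hl
        omega
    -- sums over all shifts agree with |T_i|
    have sumX : ∑ l : ZMod c, (univ.filter (fun j : Fin n => i ∈ S j ∧ X j = R j + l)).card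
        = (univ.filter (fun j : Fin n => i ∈ S j)).card := by
      rw [Finset.card_eq_sum_card_fiberwise (f := fun j => X j - R j) (t := univ)
        (fun x _ => mem_univ _)]
      apply Finset.sum_congr rfl
      intro l _
      rw [Finset.filter_filter]
      congr 1
      ext j
      simp only [Finset.mem_filter, Finset.mem_univ, true_and, sub_eq_iff_eq_add']
    have sumX' : ∑ l : ZMod c, (univ.filter (fun j : Fin n => i ∈ S j ∧ X' j = R j + l)).card
        = (univ.filter (fun j : Fin n => i ∈ S j)).card := by
      rw [Finset.card_eq_sum_card_fiberwise (f := fun j => X' j - R j) (t := univ)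
        (fun x _ => mem_univ _)]
      apply Finset.sum_congr rfl
      intro l _
      rw [Finset.filter_filter]
      congr 1
      ext j
      simp only [Finset.mem_filter, Finset.mem_univ, true_and, sub_eq_iff_eq_add']
    -- sum P over all l
    have hsum : ∑ l : ZMod c, ((univ.filter (fun j : Fin n => i ∈ S j ∧ X j = R j + l)).card
          + (univ.filter (fun j : Fin n => i ∈ S j ∧ X' j = R j)).card)
        = ∑ l : ZMod c, ((univ.filter (fun j : Fin n => i ∈ S j ∧ X' j = R j + l)).card
          + (univ.filter (fun j : Fin n => i ∈ S j ∧ X j = R j)).card) :=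
      Finset.sum_congr rfl (fun l _ => P l)
    rw [Finset.sum_add_distrib, Finset.sum_add_distrib, sumX, sumX',
      Finset.sum_const, Finset.sum_const] at hsum
    simp only [smul_eq_mul] at hsum
    have hcard : (univ : Finset (ZMod c)).card = c := by
      simp [ZMod.card]
    rw [hcard] at hsum
    have hzero : (univ.filter (fun j : Fin n => i ∈ S j ∧ X' j = R j)).card
        = (univ.filter (fun j : Fin n => i ∈ S j ∧ X j = R j)).card := by
      have hc0 : 0 < c := by omega
      have := Nat.eq_of_mul_eq_mul_left hc0 (by omega : c * (univ.filter (fun j : Fin n => i ∈ S j ∧ X' j = R j)).card = c * (univ.filter (fun j : Fin n => i ∈ S j ∧ X j = R j)).card)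
      exact this
    intro l
    have := P l
    omega
  -- distinguishing step, both directions
  have dirX : ∀ l : ZMod c, l ≠ 0 → ∀ j, X' j = R j + l → X j = R j + l := by
    intro l hl j hj
    by_contra hne
    obtain ⟨i, hi, hdist⟩ := hX l hl j hne
    have hf0 : (univ.filter (fun j : Fin n => i ∈ S j ∧ X j = R j + l)).card = 0 := by
      rw [Finset.card_eq_zero, Finset.filter_eq_empty_iff]
      intro k _
      rintro ⟨hik, hk⟩
      exact hdist k hk hik
    have hg1 : 0 < (univ.filter (fun k : Fin n => i ∈ S k ∧ X' k = R k + l)).card := by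
      rw [Finset.card_pos]
      exact ⟨j, Finset.mem_filter.2 ⟨mem_univ _, hi, hj⟩⟩
    have := key i l
    omega
  have dirX' : ∀ l : ZMod c, l ≠ 0 → ∀ j, X j = R j + l → X' j = R j + l := by
    intro l hl j hj
    by_contra hne
    obtain ⟨i, hi, hdist⟩ := hX' l hl j hne
    have hg0 : (univ.filter (fun j : Fin n => i ∈ S j ∧ X' j = R j + l)).card = 0 := by
      rw [Finset.card_eq_zero, Finset.filter_eq_empty_iff]
      intro k _
      rintro ⟨hik, hk⟩
      exact hdist k hk hik
    have hf1 : 0 < (univ.filter (fun k : Fin n => i ∈ S k ∧ X k = R k + l)).card := by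
      rw [Finset.card_pos]
      exact ⟨j, Finset.mem_filter.2 ⟨mem_univ _, hi, hj⟩⟩
    have := key i l
    omega
  funext j
  by_cases hx : X j = R j
  · by_contra hne
    have hl : X' j - R j ≠ 0 := by
      intro h0
      rw [sub_eq_zero] at h0
      exact hne (by rw [hx, h0])
    have h2 := dirX (X' j - R j) hl j (by rw [add_sub_cancel])
    apply hne
    rw [h2, add_sub_cancel]
  · have hl : X j - R j ≠ 0 := fun h0 => hx (by rwa [sub_eq_zero] at h0)
    have h2 := dirX' (X j - R j) hl j (by rw [add_sub_cancel])
    rw [h2, add_sub_cancel]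
end

section
/- (Theorem 2) Let c ≥ 2, n ≥ 2, g ≥ 1, let R : Fin n → ZMod c be a reference string, and let X₁, …, X_g : Fin n → ZMod c be strings each differing from R in at most d positions, where 1 ≤ d ≤ n. Let t be a positive multiple of d with t ≥ 2 * d * log₂ n + min (d * log₂ g) (d² * log₂ (Real.exp 1 * n / d)). Then, with probability at least 1 − (c − 1)/n, the random design on n items with 2t tests and column-sparsity t/d is simultaneously D_l(Xᵢ)-distinguishing for every i ∈ {1, …, g} and every nonzero l ∈ ZMod c; on this event every string Xᵢ is uniquely determined by the responses b(R, Xᵢ) and b(Q_{k,l}, Xᵢ) to the 2t(c−1) nonadaptive shifted queries Q_{k,l}. -/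
/-- The space of nonadaptive designs on `n` items with `2t` tests and
column-sparsity `s`: functions assigning to each item an `s`-element subset of
`Fin (2t)`.  The uniform distribution on this set is the product over items of
the uniform distributions on `s`-element subsets. -/
abbrev designSpace (n t s : ℕ) : Finset (Fin n → Finset (Fin (2 * t))) :=
  Finset.univ.filter (fun S => ∀ j, (S j).card = s)

/-- The event that the design `S` is `D_l(Xᵢ)`-distinguishing for every string
`Xᵢ` in the family and every nonzero shift `l`, where
`D_l(X) = {j : X j = R j + l}`. -/
abbrev allDistinguishing (n c g t : ℕ) (R : Fin n → ZMod c)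
    (X : Fin g → Fin n → ZMod c) (S : Fin n → Finset (Fin (2 * t))) : Prop :=
  ∀ i : Fin g, ∀ l : ZMod c, l ≠ 0 → ∀ j, X i j ≠ R j + l →
    ∃ a ∈ S j, ∀ k, X i k = R k + l → a ∉ S k

noncomputable instance (n c g t : ℕ) (R : Fin n → ZMod c) (X : Fin g → Fin n → ZMod c) :
    DecidablePred (allDistinguishing n c g t R X) := fun _ => Classical.dec _

/-!
Decoding: for a test `k` and a shift `l`, let `N(k, l)` count the items `j ∈ T_k` with
`X j = R j + l`. Since `b(Q_{k,l}, X) - b(R, X) = N(k, l) - N(k, 0)` and `∑_l N(k, l) = |T_k|`,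
the responses determine all `N(k, l)`. If the design is `D_l(X)`-distinguishing, then
`X j = R j + l` exactly when `N(k, l) > 0` for every test `k ∋ j`, so the counts determine `X`.

Probability: for `|D| ≤ d` and `j ∉ D`, resampling the column `S j` shows that
`S j ⊆ ⋃_{k ∈ D} S k` has probability at most `C(t, s) / C(2t, s) ≤ 2^{-s}`, where
`s = t / d`. There are at most
`min (g (c - 1)) (∑_{k ≤ d} C(n, k)) ≤ (c - 1) min g (e n / d)^d` difference sets `D_l(Xᵢ)`,
and the bound on `t` says `2^s ≥ n² min g (e n / d)^d`; a union bound over the difference sets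
and the items `j` leaves a failure probability of at most `(c - 1) / n`.
-/

open Finset Function

def IsDistinguishing {ι κ : Type*} (S : ι → Finset κ) (D : Finset ι) : Prop :=
  ∀ j ∉ D, ∃ a ∈ S j, ∀ k ∈ D, a ∉ S k

lemma not_isDistinguishing_iff {ι κ : Type*} [DecidableEq κ] {S : ι → Finset κ}
    {D : Finset ι} :
    ¬IsDistinguishing S D ↔ ∃ j ∉ D, S j ⊆ D.biUnion S := by
  simp [IsDistinguishing, subset_iff]

lemma two_pow_mul_descFactorial_le (t s : ℕ) :
    2 ^ s * t.descFactorial s ≤ (2 * t).descFactorial s := by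
  induction s with
  | zero => simp
  | succ s ih =>
    rw [Nat.descFactorial_succ, Nat.descFactorial_succ, pow_succ]
    calc 2 ^ s * 2 * ((t - s) * t.descFactorial s)
        = 2 * (t - s) * (2 ^ s * t.descFactorial s) := by ring
      _ ≤ (2 * t - s) * (2 * t).descFactorial s := Nat.mul_le_mul (by omega) ih

lemma two_pow_mul_choose_le_choose_two_mul (t s : ℕ) :
    2 ^ s * t.choose s ≤ (2 * t).choose s := by
  have h := two_pow_mul_descFactorial_le t s
  rw [Nat.descFactorial_eq_factorial_mul_choose, Nat.descFactorial_eq_factorial_mul_choose,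
    mul_left_comm] at h
  exact Nat.le_of_mul_le_mul_left h (Nat.factorial_pos s)

lemma card_filter_exists_le_sum {α β : Type*} [DecidableEq α] (s : Finset α) (I : Finset β)
    (p : β → α → Prop) [∀ i, DecidablePred (p i)]
    [DecidablePred fun a => ∃ i ∈ I, p i a] :
    #(s.filter fun a => ∃ i ∈ I, p i a) ≤ ∑ i ∈ I, #(s.filter (p i)) := by
  refine (card_le_card fun a ha => ?_).trans card_biUnion_le
  obtain ⟨has, i, hi, hpa⟩ := mem_filter.1 ha
  exact mem_biUnion.2 ⟨i, hi, mem_filter.2 ⟨has, hpa⟩⟩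

lemma one_sub_le_card_filter_div_card {α : Type*} {Ω : Finset α} (hΩ : Ω.Nonempty)
    {P : α → Prop} [DecidablePred P] {ε : ℝ}
    (h : (#(Ω.filter fun a => ¬P a) : ℝ) / #Ω ≤ ε) :
    1 - ε ≤ #(Ω.filter P) / #Ω := by
  have hΩ' : (0 : ℝ) < #Ω := by exact_mod_cast hΩ.card_pos
  have hsplit : (#(Ω.filter P) : ℝ) + #(Ω.filter fun a => ¬P a) = #Ω := by
    exact_mod_cast card_filter_add_card_filter_not P
  rw [div_le_iff₀ hΩ'] at h
  rw [le_div_iff₀ hΩ']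
  linarith

section Decoding

variable {ι κ G : Type*} [DecidableEq κ] [AddCommGroup G]

def shiftedQuery (S : ι → Finset κ) (R : ι → G) (k : κ) (l : G) : ι → G :=
  fun j => if k ∈ S j then R j + l else R j

@[simp]
lemma shiftedQuery_zero (S : ι → Finset κ) (R : ι → G) (k : κ) :
    shiftedQuery S R k 0 = R := by
  ext j
  simp [shiftedQuery]

variable [Fintype ι] [DecidableEq G]

def shiftSet (R X : ι → G) (l : G) : Finset ι :=
  univ.filter fun j => X j = R j + l

def score (Q X : ι → G) : ℕ :=
  #(univ.filter fun j => Q j = X j)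

def shiftCount (S : ι → Finset κ) (R X : ι → G) (k : κ) (l : G) : ℕ :=
  #(univ.filter fun j => k ∈ S j ∧ X j = R j + l)

variable (S : ι → Finset κ) (R : ι → G)

lemma score_shiftedQuery_add_shiftCount_zero (X : ι → G) (k : κ) (l : G) :
    score (shiftedQuery S R k l) X + shiftCount S R X k 0 = score R X + shiftCount S R X k l := by
  simp only [score, shiftCount, card_filter, ← sum_add_distrib]
  refine sum_congr rfl fun j _ => ?_
  by_cases hk : k ∈ S j
  · simp only [shiftedQuery, hk, if_true, true_and, add_zero, eq_comm (a := X j)]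
    ring
  · simp [shiftedQuery, hk]

lemma sum_shiftCount [Fintype G] (X : ι → G) (k : κ) :
    ∑ l, shiftCount S R X k l = #(univ.filter fun j => k ∈ S j) := by
  rw [card_eq_sum_card_fiberwise (f := fun j => X j - R j) (t := univ) fun _ _ => mem_univ _]
  refine sum_congr rfl fun l _ => congrArg card ?_
  ext j
  simp [sub_eq_iff_eq_add']

lemma shiftCount_eq_of_score_eq [Fintype G] {X Y : ι → G}
    (h : ∀ k l, score (shiftedQuery S R k l) X = score (shiftedQuery S R k l) Y) :
    shiftCount S R X = shiftCount S R Y := by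
  ext k l
  have hdiff (l : G) : shiftCount S R X k l + shiftCount S R Y k 0
      = shiftCount S R Y k l + shiftCount S R X k 0 := by
    have hX := score_shiftedQuery_add_shiftCount_zero S R X k l
    have hY := score_shiftedQuery_add_shiftCount_zero S R Y k l
    have h0 := h k 0
    rw [shiftedQuery_zero] at h0
    rw [h k l, h0] at hX
    omega
  have hzero : shiftCount S R X k 0 = shiftCount S R Y k 0 := by
    have hsum := sum_congr rfl fun l (_ : l ∈ univ) => hdiff l
    simp only [sum_add_distrib, sum_const, card_univ, sum_shiftCount, smul_eq_mul] at hsum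
    exact (Nat.eq_of_mul_eq_mul_left Fintype.card_pos (Nat.add_left_cancel hsum)).symm
  have := hdiff l
  omega

lemma eq_add_iff_forall_shiftCount_pos {X : ι → G} {l : G}
    (hS : IsDistinguishing S (shiftSet R X l)) (j : ι) :
    X j = R j + l ↔ ∀ k ∈ S j, 0 < shiftCount S R X k l := by
  constructor
  · intro hj k hk
    exact card_pos.2 ⟨j, by simp [hk, hj]⟩
  · intro hpos
    by_contra hj
    obtain ⟨a, ha, hfree⟩ := hS j (by simpa [shiftSet] using hj)
    obtain ⟨k, hk⟩ := card_pos.1 (hpos a ha)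
    simp only [mem_filter, mem_univ, true_and] at hk
    exact hfree k (by simpa [shiftSet] using hk.2) hk.1

lemma eq_of_shiftCount_eq {X Y : ι → G}
    (hX : ∀ l ≠ 0, IsDistinguishing S (shiftSet R X l))
    (hY : ∀ l ≠ 0, IsDistinguishing S (shiftSet R Y l))
    (h : shiftCount S R X = shiftCount S R Y) : X = Y := by
  have transfer (j : ι) (l : G) (hl : l ≠ 0) : X j = R j + l ↔ Y j = R j + l := by
    rw [eq_add_iff_forall_shiftCount_pos S R (hX l hl),
      eq_add_iff_forall_shiftCount_pos S R (hY l hl), h]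
  ext j
  rcases eq_or_ne (X j - R j) 0 with hXj | hXj
  · rcases eq_or_ne (Y j - R j) 0 with hYj | hYj
    · rw [sub_eq_zero.1 hXj, sub_eq_zero.1 hYj]
    · simpa using (transfer j _ hYj).2 (add_sub_cancel _ _).symm
  · simpa using ((transfer j _ hXj).1 (add_sub_cancel _ _).symm).symm

theorem exists_decoder [Fintype G] {γ : Type*} (X : γ → ι → G)
    (hX : ∀ i, ∀ l ≠ 0, IsDistinguishing S (shiftSet R (X i) l)) :
    ∃ F : ℕ → (κ → {l : G // l ≠ 0} → ℕ) → (ι → G), ∀ i,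
      F (score R (X i)) (fun k l => score (shiftedQuery S R k l) (X i)) = X i := by
  have : X.FactorsThrough fun i => (score R (X i), fun k (l : {l : G // l ≠ 0}) =>
      score (shiftedQuery S R k l) (X i)) := by
    intro i i' h
    simp only [Prod.mk.injEq, funext_iff] at h
    refine eq_of_shiftCount_eq S R (hX i) (hX i') (shiftCount_eq_of_score_eq S R fun k l => ?_)
    by_cases hl : l = 0
    · simpa [hl] using h.1
    · exact h.2 k ⟨l, hl⟩
  obtain ⟨F, hF⟩ := (factorsThrough_iff _).1 this
  exact ⟨curry F, fun i => (congrFun hF i).symm⟩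

end Decoding

section Designs

variable {ι κ : Type*} [Fintype ι] [DecidableEq ι] [Fintype κ]

variable (ι κ) in
def sparseDesigns (s : ℕ) : Finset (ι → Finset κ) :=
  univ.filter fun S => ∀ j, #(S j) = s

@[simp]
lemma mem_sparseDesigns {s : ℕ} {S : ι → Finset κ} :
    S ∈ sparseDesigns ι κ s ↔ ∀ j, #(S j) = s := by
  simp [sparseDesigns]

lemma sparseDesigns_nonempty {s : ℕ} (hs : s ≤ Fintype.card κ) :
    (sparseDesigns ι κ s).Nonempty := by
  obtain ⟨A, -, hA⟩ := exists_subset_card_eq (s := (univ : Finset κ)) (by simpa using hs)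
  exact ⟨fun _ => A, by simpa using fun _ => hA⟩

lemma card_filter_mul_choose_eq_sum (s : ℕ) (j : ι) (P : (ι → Finset κ) → Prop)
    [DecidablePred P] :
    #((sparseDesigns ι κ s).filter P) * (Fintype.card κ).choose s =
      ∑ S ∈ sparseDesigns ι κ s,
        #((powersetCard s univ).filter fun A => P (update S j A)) := by
  have hsum :
      ∑ S ∈ sparseDesigns ι κ s, #((powersetCard s univ).filter fun A => P (update S j A)) =
      #((sparseDesigns ι κ s ×ˢ powersetCard s univ).filter fun p => P (update p.1 j p.2)) := by
    simp only [card_filter, sum_product]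
  rw [hsum, ← card_univ, ← card_powersetCard, ← card_product]
  -- `(S, A) ↦ (update S j A, S j)` is an involution exchanging the two events
  let swap : (ι → Finset κ) × Finset κ → (ι → Finset κ) × Finset κ :=
    fun p => (update p.1 j p.2, p.1 j)
  have swap_swap (p) : swap (swap p) = p := by simp [swap]
  have update_mem {S : ι → Finset κ} {A : Finset κ} (hS : S ∈ sparseDesigns ι κ s)
      (hA : #A = s) :
      update S j A ∈ sparseDesigns ι κ s := by
    rw [mem_sparseDesigns] at hS ⊢
    intro k
    rcases eq_or_ne k j with rfl | hk
    · simpa using hA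
    · simpa [hk] using hS k
  refine card_nbij' swap swap ?_ ?_ (fun p _ => swap_swap p) (fun p _ => swap_swap p)
  · rintro ⟨S, A⟩ h
    simp only [swap, mem_coe, mem_product, mem_filter, mem_powersetCard, subset_univ,
      true_and] at h ⊢
    exact ⟨⟨update_mem h.1.1 h.2, mem_sparseDesigns.1 h.1.1 j⟩, by simpa using h.1.2⟩
  · rintro ⟨S, A⟩ h
    simp only [swap, mem_coe, mem_product, mem_filter, mem_powersetCard, subset_univ,
      true_and] at h ⊢
    exact ⟨⟨update_mem h.1.1 h.1.2, h.2⟩, mem_sparseDesigns.1 h.1.1 j⟩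

variable [DecidableEq κ]

instance (S : ι → Finset κ) (D : Finset ι) : Decidable (IsDistinguishing S D) := by
  unfold IsDistinguishing; infer_instance

lemma card_filter_subset_biUnion_mul_choose_le {s : ℕ} {D : Finset ι} {j : ι} (hj : j ∉ D) :
    #((sparseDesigns ι κ s).filter fun S => S j ⊆ D.biUnion S) * (Fintype.card κ).choose s ≤
      (#D * s).choose s * #(sparseDesigns ι κ s) := by
  rw [card_filter_mul_choose_eq_sum s j, mul_comm, ← smul_eq_mul, ← sum_const]
  refine sum_le_sum fun S hS => ?_
  have hcover (A : Finset κ) : D.biUnion (update S j A) = D.biUnion S :=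
    biUnion_congr rfl fun k hk => update_of_ne (ne_of_mem_of_not_mem hk hj) _ _
  have hcard : #(D.biUnion S) ≤ #D * s :=
    card_biUnion_le.trans (sum_le_card_nsmul _ _ _ fun k _ => (mem_sparseDesigns.1 hS k).le)
  calc #((powersetCard s univ).filter fun A => update S j A j ⊆ D.biUnion (update S j A))
      ≤ #(powersetCard s (D.biUnion S)) := by
        refine card_le_card fun A hA => ?_
        simp only [mem_filter, mem_powersetCard, update_self, hcover] at hA ⊢
        exact ⟨hA.2, hA.1.2⟩
    _ ≤ (#D * s).choose s := by
        rw [card_powersetCard]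
        exact Nat.choose_le_choose s hcard

lemma two_pow_mul_card_filter_subset_biUnion_le {t s : ℕ} (hκ : Fintype.card κ = 2 * t)
    (hst : s ≤ t) {D : Finset ι} (hD : #D * s ≤ t) {j : ι} (hj : j ∉ D) :
    2 ^ s * #((sparseDesigns ι κ s).filter fun S => S j ⊆ D.biUnion S) ≤
      #(sparseDesigns ι κ s) := by
  have h := card_filter_subset_biUnion_mul_choose_le (κ := κ) (s := s) hj
  rw [hκ] at h
  refine Nat.le_of_mul_le_mul_right ?_ (Nat.choose_pos hst)
  calc 2 ^ s * #((sparseDesigns ι κ s).filter fun S => S j ⊆ D.biUnion S) * t.choose s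
      ≤ #((sparseDesigns ι κ s).filter fun S => S j ⊆ D.biUnion S) * (2 * t).choose s := by
        rw [mul_comm (2 ^ s), mul_assoc]
        exact Nat.mul_le_mul_left _ (two_pow_mul_choose_le_choose_two_mul t s)
    _ ≤ (#D * s).choose s * #(sparseDesigns ι κ s) := h
    _ ≤ t.choose s * #(sparseDesigns ι κ s) :=
        Nat.mul_le_mul_right _ (Nat.choose_le_choose s hD)
    _ = #(sparseDesigns ι κ s) * t.choose s := mul_comm _ _

lemma two_pow_mul_card_filter_not_isDistinguishing_le {t s : ℕ} (hκ : Fintype.card κ = 2 * t)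
    (hst : s ≤ t) {D : Finset ι} (hD : #D * s ≤ t) :
    2 ^ s * #((sparseDesigns ι κ s).filter fun S => ¬IsDistinguishing S D) ≤
      Fintype.card ι * #(sparseDesigns ι κ s) := by
  simp_rw [not_isDistinguishing_iff, ← mem_compl]
  calc 2 ^ s * #((sparseDesigns ι κ s).filter fun S => ∃ j ∈ Dᶜ, S j ⊆ D.biUnion S)
      ≤ ∑ j ∈ Dᶜ, 2 ^ s *
          #((sparseDesigns ι κ s).filter fun S => S j ⊆ D.biUnion S) := by
        rw [← mul_sum]
        exact Nat.mul_le_mul_left _ (card_filter_exists_le_sum _ _ _)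
    _ ≤ ∑ _j ∈ Dᶜ, #(sparseDesigns ι κ s) := sum_le_sum fun j hj =>
        two_pow_mul_card_filter_subset_biUnion_le hκ hst hD (mem_compl.1 hj)
    _ ≤ Fintype.card ι * #(sparseDesigns ι κ s) := by
        rw [sum_const, smul_eq_mul]
        exact Nat.mul_le_mul_right _ (card_le_univ _)

lemma two_pow_mul_card_filter_exists_not_isDistinguishing_le {t s : ℕ}
    (hκ : Fintype.card κ = 2 * t) (hst : s ≤ t) {𝒟 : Finset (Finset ι)}
    (h𝒟 : ∀ D ∈ 𝒟, #D * s ≤ t) :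
    2 ^ s * #((sparseDesigns ι κ s).filter fun S => ∃ D ∈ 𝒟, ¬IsDistinguishing S D) ≤
      #𝒟 * Fintype.card ι * #(sparseDesigns ι κ s) := by
  calc 2 ^ s * #((sparseDesigns ι κ s).filter fun S => ∃ D ∈ 𝒟, ¬IsDistinguishing S D)
      ≤ ∑ D ∈ 𝒟, 2 ^ s *
          #((sparseDesigns ι κ s).filter fun S => ¬IsDistinguishing S D) := by
        rw [← mul_sum]
        exact Nat.mul_le_mul_left _ (card_filter_exists_le_sum _ _ _)
    _ ≤ ∑ _D ∈ 𝒟, Fintype.card ι * #(sparseDesigns ι κ s) :=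
        sum_le_sum fun D hD => two_pow_mul_card_filter_not_isDistinguishing_le hκ hst (h𝒟 D hD)
    _ = #𝒟 * Fintype.card ι * #(sparseDesigns ι κ s) := by
        rw [sum_const, smul_eq_mul, mul_assoc]

lemma card_filter_exists_not_isDistinguishing_div_le {t s : ℕ}
    (hκ : Fintype.card κ = 2 * t) (hst : s ≤ t) {𝒟 : Finset (Finset ι)}
    (h𝒟 : ∀ D ∈ 𝒟, #D * s ≤ t) :
    (#((sparseDesigns ι κ s).filter fun S => ∃ D ∈ 𝒟, ¬IsDistinguishing S D) : ℝ) /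
      #(sparseDesigns ι κ s) ≤ #𝒟 * Fintype.card ι / 2 ^ s := by
  have hΩ : (0 : ℝ) < #(sparseDesigns ι κ s) := by
    exact_mod_cast (sparseDesigns_nonempty (by omega)).card_pos
  rw [div_le_div_iff₀ hΩ (by positivity), mul_comm]
  exact_mod_cast two_pow_mul_card_filter_exists_not_isDistinguishing_le hκ hst h𝒟

end Designs

section Counting

lemma card_filter_card_le_eq_sum_choose (ι : Type*) [Fintype ι] [DecidableEq ι] (d : ℕ) :
    #(univ.filter fun D : Finset ι => #D ≤ d) =
      ∑ k ∈ range (d + 1), (Fintype.card ι).choose k := by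
  rw [card_eq_sum_card_fiberwise (f := card) (t := range (d + 1))
    fun D hD => mem_range.2 (Nat.lt_succ_of_le (mem_filter.1 hD).2)]
  refine sum_congr rfl fun k hk => ?_
  rw [← card_univ, ← card_powersetCard]
  congr 1
  ext D
  simp only [mem_filter, mem_univ, true_and, mem_powersetCard_univ]
  exact ⟨And.right, fun h => ⟨h ▸ Nat.le_of_lt_succ (mem_range.1 hk), h⟩⟩

lemma sum_range_choose_le_exp_mul_div_pow {n d : ℕ} (hd : 1 ≤ d) (hdn : d ≤ n) :
    ∑ k ∈ range (d + 1), (n.choose k : ℝ) ≤ (Real.exp 1 * n / d) ^ d := by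
  have hn : (0 : ℝ) < n := by exact_mod_cast hd.trans hdn
  have hd' : (0 : ℝ) < d := by exact_mod_cast hd
  set x : ℝ := d / n with hxdef
  have hx : 0 < x := by positivity
  have hx1 : x ≤ 1 := (div_le_one hn).2 (by exact_mod_cast hdn)
  -- compare with the binomial expansion of `(1 + x) ^ n ≤ exp (n x) = e ^ d`
  have key : (∑ k ∈ range (d + 1), (n.choose k : ℝ)) * x ^ d ≤ Real.exp 1 ^ d := by
    calc (∑ k ∈ range (d + 1), (n.choose k : ℝ)) * x ^ d
        ≤ ∑ k ∈ range (d + 1), (n.choose k : ℝ) * x ^ k := by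
          rw [sum_mul]
          refine sum_le_sum fun k hk => mul_le_mul_of_nonneg_left ?_ (by positivity)
          exact pow_le_pow_of_le_one hx.le hx1 (Nat.le_of_lt_succ (mem_range.1 hk))
      _ ≤ ∑ k ∈ range (n + 1), (n.choose k : ℝ) * x ^ k :=
          sum_le_sum_of_subset_of_nonneg (range_subset_range.2 (by omega))
            fun k _ _ => by positivity
      _ = (x + 1) ^ n := by
          rw [add_pow]
          exact sum_congr rfl fun k _ => by ring
      _ ≤ Real.exp x ^ n := pow_le_pow_left₀ (by positivity) (Real.add_one_le_exp x) n
      _ = Real.exp 1 ^ d := by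
          rw [← Real.exp_nat_mul, ← Real.exp_nat_mul, mul_one, mul_div_cancel₀ _ hn.ne']
  calc ∑ k ∈ range (d + 1), (n.choose k : ℝ) ≤ Real.exp 1 ^ d / x ^ d :=
        (le_div_iff₀ (by positivity)).2 key
    _ = (Real.exp 1 * n / d) ^ d := by
        rw [← div_pow, hxdef, div_div_eq_mul_div]

lemma sq_mul_min_le_two_pow {n g E : ℝ} {d s : ℕ} (hn : 0 < n) (hg : 0 < g) (hE : 0 < E)
    (hd : 0 < d)
    (h : 2 * d * Real.logb 2 n + min (d * Real.logb 2 g) (d ^ 2 * Real.logb 2 E) ≤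
      (d * s : ℕ)) :
    n ^ 2 * min g (E ^ d) ≤ 2 ^ s := by
  have hd' : (0 : ℝ) < d := by exact_mod_cast hd
  have hs : 2 * Real.logb 2 n + min (Real.logb 2 g) (d * Real.logb 2 E) ≤ s := by
    refine le_of_mul_le_mul_left ?_ hd'
    rw [mul_add, mul_min_of_nonneg _ _ hd'.le, ← mul_assoc (d : ℝ) d, ← sq]
    push_cast at h
    linarith
  have hmin : 0 < min g (E ^ d) := lt_min hg (by positivity)
  rw [← Real.rpow_natCast (2 : ℝ) s, ← Real.logb_le_iff_le_rpow one_lt_two (by positivity),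
    Real.logb_mul (by positivity) hmin.ne', Real.logb_pow]
  have hlog : Real.logb 2 (min g (E ^ d)) ≤ min (Real.logb 2 g) (d * Real.logb 2 E) := by
    rw [← Real.logb_pow]
    exact le_min (Real.logb_le_logb_of_le one_lt_two hmin (min_le_left _ _))
      (Real.logb_le_logb_of_le one_lt_two hmin (min_le_right _ _))
  push_cast
  linarith

variable {ι γ G : Type*} [Fintype ι] [DecidableEq ι] [Fintype γ]
  [AddCommGroup G] [Fintype G] [DecidableEq G]

def differenceSets (R : ι → G) (X : γ → ι → G) : Finset (Finset ι) :=
  (univ ×ˢ univ.filter (· ≠ 0)).image fun p => shiftSet R (X p.1) p.2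

lemma forall_mem_differenceSets_iff {R : ι → G} {X : γ → ι → G} {P : Finset ι → Prop} :
    (∀ D ∈ differenceSets R X, P D) ↔ ∀ i, ∀ l ≠ 0, P (shiftSet R (X i) l) := by
  simp only [differenceSets, mem_image, mem_product, mem_filter, mem_univ, true_and, Prod.exists]
  exact ⟨fun h i l hl => h _ ⟨i, l, hl, rfl⟩, fun h D ⟨i, l, hl, hD⟩ => hD ▸ h i l hl⟩

lemma card_differenceSets_le (R : ι → G) (X : γ → ι → G) :
    #(differenceSets R X) ≤ Fintype.card γ * (Fintype.card G - 1) := by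
  refine card_image_le.trans_eq ?_
  rw [card_product, filter_ne', card_erase_of_mem (mem_univ _), card_univ, card_univ]

lemma card_le_of_mem_differenceSets {R : ι → G} {X : γ → ι → G} {d : ℕ}
    (hX : ∀ i, #(univ.filter fun j => X i j ≠ R j) ≤ d) :
    ∀ D ∈ differenceSets R X, #D ≤ d := by
  refine forall_mem_differenceSets_iff.2 fun i l hl => (card_le_card fun j hj => ?_).trans (hX i)
  simp only [shiftSet, mem_filter, mem_univ, true_and] at hj ⊢
  rw [hj]
  exact fun h => hl (add_eq_left.1 h)

lemma card_differenceSets_le_mul_min [Nontrivial G] {R : ι → G} {X : γ → ι → G} {d : ℕ}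
    (hX : ∀ i, #(univ.filter fun j => X i j ≠ R j) ≤ d) (hd : 1 ≤ d)
    (hdn : d ≤ Fintype.card ι) :
    (#(differenceSets R X) : ℝ) ≤ (Fintype.card G - 1) *
      min (Fintype.card γ : ℝ) ((Real.exp 1 * Fintype.card ι / d) ^ d) := by
  have hG : (1 : ℝ) ≤ Fintype.card G - 1 := by
    have := Fintype.one_lt_card (α := G)
    rw [le_sub_iff_add_le]
    exact_mod_cast this
  rw [mul_min_of_nonneg _ _ (by linarith)]
  refine le_min ?_ ?_
  · have := card_differenceSets_le R X
    calc (#(differenceSets R X) : ℝ) ≤ (Fintype.card γ * (Fintype.card G - 1) : ℕ) := by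
          exact_mod_cast this
      _ = (Fintype.card G - 1) * Fintype.card γ := by
          push_cast [Nat.cast_pred Fintype.card_pos]
          ring
  · have hsets : #(differenceSets R X) ≤ #(univ.filter fun D : Finset ι => #D ≤ d) :=
      card_le_card fun D hD => mem_filter.2 ⟨mem_univ _, card_le_of_mem_differenceSets hX D hD⟩
    rw [card_filter_card_le_eq_sum_choose] at hsets
    calc (#(differenceSets R X) : ℝ)
        ≤ ∑ k ∈ range (d + 1), ((Fintype.card ι).choose k : ℝ) := by
          exact_mod_cast hsets
      _ ≤ (Real.exp 1 * Fintype.card ι / d) ^ d := sum_range_choose_le_exp_mul_div_pow hd hdn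
      _ ≤ _ := le_mul_of_one_le_left (by positivity) hG

lemma card_differenceSets_mul_div_two_pow_le [Nontrivial G] {R : ι → G} {X : γ → ι → G}
    {d s : ℕ} (hX : ∀ i, #(univ.filter fun j => X i j ≠ R j) ≤ d) (hd : 1 ≤ d)
    (hdn : d ≤ Fintype.card ι) (hγ : 0 < Fintype.card γ)
    (h : 2 * d * Real.logb 2 (Fintype.card ι) + min (d * Real.logb 2 (Fintype.card γ))
      (d ^ 2 * Real.logb 2 (Real.exp 1 * Fintype.card ι / d)) ≤ (d * s : ℕ)) :
    (#(differenceSets R X) : ℝ) * Fintype.card ι / 2 ^ s ≤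
      (Fintype.card G - 1) / Fintype.card ι := by
  have hn : (0 : ℝ) < Fintype.card ι := by exact_mod_cast hd.trans hdn
  have hpow := sq_mul_min_le_two_pow hn (by exact_mod_cast hγ) (by positivity) hd h
  have h𝒟 := card_differenceSets_le_mul_min (R := R) (X := X) hX hd hdn
  have hG : (0 : ℝ) ≤ Fintype.card G - 1 := sub_nonneg.2 (by exact_mod_cast Fintype.card_pos)
  rw [div_le_div_iff₀ (by positivity) hn]
  nlinarith [mul_le_mul_of_nonneg_right h𝒟 (sq_nonneg (Fintype.card ι : ℝ)),
    mul_le_mul_of_nonneg_left hpow hG]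

end Counting

lemma designSpace_eq_sparseDesigns (n t s : ℕ) :
    designSpace n t s = sparseDesigns (Fin n) (Fin (2 * t)) s := by
  ext S
  simp

theorem mastermind_cloning_attack_general (n c g t d : ℕ) (hc : 2 ≤ c)
    (hg : 1 ≤ g) (hd : 1 ≤ d) (hdn : d ≤ n) (hdvd : d ∣ t)
    (htb : 2 * (d : ℝ) * Real.logb 2 n
        + min ((d : ℝ) * Real.logb 2 g)
            ((d : ℝ) ^ 2 * Real.logb 2 (Real.exp 1 * n / d)) ≤ t)
    (R : Fin n → ZMod c) (X : Fin g → Fin n → ZMod c)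
    (hX : ∀ i, (Finset.univ.filter (fun j => X i j ≠ R j)).card ≤ d) :
    1 - ((c : ℝ) - 1) / n ≤
      (((designSpace n t (t / d)).filter (allDistinguishing n c g t R X)).card : ℝ) /
        ((designSpace n t (t / d)).card : ℝ) ∧
    ∀ S ∈ designSpace n t (t / d), allDistinguishing n c g t R X S →
      ∃ F : ℕ → (Fin (2 * t) → {l : ZMod c // l ≠ 0} → ℕ) → (Fin n → ZMod c),
        ∀ i : Fin g,
          F ((Finset.univ.filter (fun j => R j = X i j)).card)
            (fun k l => (Finset.univ.filter
              (fun j => (if k ∈ S j then R j + (l : ZMod c) else R j) = X i j)).card)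
            = X i := by
  have : Fact (1 < c) := ⟨hc⟩
  obtain ⟨s, rfl⟩ := hdvd
  have hdist (S : Fin n → Finset (Fin (2 * (d * s)))) :
      allDistinguishing n c g (d * s) R X S ↔
        ∀ D ∈ differenceSets R X, IsDistinguishing S D := by
    rw [forall_mem_differenceSets_iff]
    simp [allDistinguishing, IsDistinguishing, shiftSet]
  rw [Nat.mul_div_cancel_left s hd, designSpace_eq_sparseDesigns]
  refine ⟨?_, fun S _ hS =>
    exists_decoder S R X (forall_mem_differenceSets_iff.1 ((hdist S).1 hS))⟩
  have hfail := card_filter_exists_not_isDistinguishing_div_le (ι := Fin n)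
    (κ := Fin (2 * (d * s))) (by simp) (Nat.le_mul_of_pos_left s hd)
    fun D hD => Nat.mul_le_mul_right s (card_le_of_mem_differenceSets hX D hD)
  have hbound := card_differenceSets_mul_div_two_pow_le (γ := Fin g) (R := R) (X := X) hX hd
    (by simpa) (by rw [Fintype.card_fin]; omega) (by simpa using htb)
  simp only [Fintype.card_fin, ZMod.card] at hfail hbound
  refine one_sub_le_card_filter_div_card (sparseDesigns_nonempty (by simp; nlinarith))
    (le_trans ?_ (hfail.trans hbound))
  gcongr with S
  simp [hdist]

/-- Theorem 2: Let `c ≥ 2`, `n ≥ 2`, `g ≥ 1`, let `R` be a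
reference string and `X₁, …, X_g : Fin n → ZMod c` strings each differing from
`R` in at most `d` positions, `1 ≤ d ≤ n`.  Let `t` be a positive multiple of
`d` with `t ≥ 2·d·log₂ n + min (d·log₂ g) (d²·log₂(e·n/d))`.  Then with
probability at least `1 - (c-1)/n` the random design with `2t` tests and
column-sparsity `t/d` is simultaneously `D_l(Xᵢ)`-distinguishing for every `i`
and every nonzero `l`; and on this event every `Xᵢ` is uniquely determined by
(i.e., there is a decoding function recovering `Xᵢ` from) the responses
`b(R, Xᵢ)` and `b(Q_{k,l}, Xᵢ)` to the `2t(c-1)` nonadaptive shifted queries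
`Q_{k,l}` (equal to `R j + l` at positions `j` of test `k`, and `R j`
elsewhere). -/
theorem mastermind_cloning_attack (n c g t d : ℕ) (hc : 2 ≤ c) (hn : 2 ≤ n)
    (hg : 1 ≤ g) (hd : 1 ≤ d) (hdn : d ≤ n) (ht : 0 < t) (hdvd : d ∣ t)
    (htb : 2 * (d : ℝ) * Real.logb 2 n
        + min ((d : ℝ) * Real.logb 2 g)
            ((d : ℝ) ^ 2 * Real.logb 2 (Real.exp 1 * n / d)) ≤ t)
    (R : Fin n → ZMod c) (X : Fin g → Fin n → ZMod c)
    (hX : ∀ i, (Finset.univ.filter (fun j => X i j ≠ R j)).card ≤ d) :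
    1 - ((c : ℝ) - 1) / n ≤
      (((designSpace n t (t / d)).filter (allDistinguishing n c g t R X)).card : ℝ) /
        ((designSpace n t (t / d)).card : ℝ) ∧
    ∀ S ∈ designSpace n t (t / d), allDistinguishing n c g t R X S →
      ∃ F : ℕ → (Fin (2 * t) → {l : ZMod c // l ≠ 0} → ℕ) → (Fin n → ZMod c),
        ∀ i : Fin g,
          F ((Finset.univ.filter (fun j => R j = X i j)).card)
            (fun k l => (Finset.univ.filter
              (fun j => (if k ∈ S j then R j + (l : ZMod c) else R j) = X i j)).card)
            = X i :=
  mastermind_cloning_attack_general n c g t d hc hg hd hdn hdvd htb R X hX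
end

section
/- (Baseline attack) Let c ≥ 2, and let R, X : Fin n → ZMod c. For each position j ∈ Fin n and each nonzero l ∈ ZMod c, define the single-position query Q_{j,l} by Q_{j,l} j = R j + l and Q_{j,l} j' = R j' for j' ≠ j, and let r = b(R, X) and r_{j,l} = b(Q_{j,l}, X). Then for every j and every nonzero l: X j = R j + l if and only if r_{j,l} = r + 1. Consequently, the (c − 1) * n single-position queries together with the reference query uniquely determine X. -/
/-- Baseline attack: For each position `j` and nonzero shift `l`,
let `Q_{j,l}` agree with the reference `R` except at position `j`, where it takes
the value `R j + l`.  Then `X j = R j + l` iff the score of `Q_{j,l}` against `X`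
equals the score of `R` against `X` plus one.  Consequently the `(c-1)·n`
single-position queries together with the reference query uniquely determine
`X`. -/
theorem baseline_attack (n c : ℕ) (hc : 2 ≤ c) (R X : Fin n → ZMod c) :
    (∀ j : Fin n, ∀ l : ZMod c, l ≠ 0 →
      (X j = R j + l ↔
        (Finset.univ.filter
            (fun j' => (if j' = j then R j + l else R j') = X j')).card =
          (Finset.univ.filter (fun j' => R j' = X j')).card + 1)) ∧
    (∀ X' : Fin n → ZMod c,
      (Finset.univ.filter (fun j' => R j' = X' j')).card =
        (Finset.univ.filter (fun j' => R j' = X j')).card →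
      (∀ j : Fin n, ∀ l : ZMod c, l ≠ 0 →
        (Finset.univ.filter
            (fun j' => (if j' = j then R j + l else R j') = X' j')).card =
          (Finset.univ.filter
            (fun j' => (if j' = j then R j + l else R j') = X j')).card) →
      X' = X) := by
  classical
  have key : ∀ (j : Fin n) (a : ZMod c) (Y : Fin n → ZMod c),
      (Finset.univ.filter (fun j' => (if j' = j then a else R j') = Y j')).card =
      ((Finset.univ.erase j).filter (fun j' => R j' = Y j')).card
        + (if a = Y j then 1 else 0) := by
    intro j a Y
    rw [Finset.card_filter, Finset.card_filter,
      ← Finset.sum_erase_add _ _ (Finset.mem_univ j)]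
    simp only [if_pos rfl]
    congr 1
    refine Finset.sum_congr rfl ?_
    intro x hx
    rw [if_neg (Finset.ne_of_mem_erase hx)]
  have base : ∀ (j : Fin n) (Y : Fin n → ZMod c),
      (Finset.univ.filter (fun j' => R j' = Y j')).card =
      ((Finset.univ.erase j).filter (fun j' => R j' = Y j')).card
        + (if R j = Y j then 1 else 0) := by
    intro j Y
    rw [Finset.card_filter, Finset.card_filter,
      ← Finset.sum_erase_add _ _ (Finset.mem_univ j)]
  have part1 : ∀ (Y : Fin n → ZMod c) (j : Fin n) (l : ZMod c), l ≠ 0 →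
      (Y j = R j + l ↔
        (Finset.univ.filter
            (fun j' => (if j' = j then R j + l else R j') = Y j')).card =
          (Finset.univ.filter (fun j' => R j' = Y j')).card + 1) := by
    intro Y j l hl
    rw [key j (R j + l) Y, base j Y]
    by_cases h1 : R j + l = Y j
    · have h2 : ¬ (R j = Y j) := by
        intro h2
        apply hl
        have := h1.trans h2.symm
        simpa using this
      rw [if_pos h1, if_neg h2]
      simp [eq_comm, h1]
    · rw [if_neg h1]
      have : ¬ (Y j = R j + l) := fun h => h1 h.symm
      simp only [this, false_iff]
      by_cases h2 : R j = Y j <;> simp [h2] <;> omega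
  constructor
  · exact part1 X
  · intro X' hbase hq
    funext j
    by_cases hx : X j = R j
    · by_contra h'
      have h'' : X' j ≠ R j := by rw [← hx]; exact h'
      have hl : X' j - R j ≠ 0 := sub_ne_zero.mpr h''
      set l := X' j - R j with hldef
      have h1 : R j + l = X' j := by rw [hldef]; ring
      have e1 := key j (R j + l) X'
      have e2 := key j (R j + l) X
      have e3 := base j X'
      have e4 := base j X
      rw [if_pos h1] at e1
      have h2 : ¬ (R j + l = X j) := by
        intro h
        apply hl
        rw [hx] at h
        simpa using h
      rw [if_neg h2] at e2
      have h3 : ¬ (R j = X' j) := fun h => h'' h.symm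
      rw [if_neg h3] at e3
      rw [if_pos hx.symm] at e4
      have := hq j l hl
      omega
    · have hl : X j - R j ≠ 0 := sub_ne_zero.mpr hx
      set l := X j - R j with hldef
      have h1 : X j = R j + l := by rw [hldef]; ring
      have hs := (part1 X j l hl).mp h1
      have hs' : (Finset.univ.filter
            (fun j' => (if j' = j then R j + l else R j') = X' j')).card =
          (Finset.univ.filter (fun j' => R j' = X' j')).card + 1 := by
        rw [hq j l hl, hbase, hs]
      have := (part1 X' j l hl).mpr hs'
      rw [this, ← h1]
end
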